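/- arXiv:math/9904128 — 6 statements merged into one kernel-verified Lean document; each statement's English description precedes it below -/
import Mathlib

section
/- If A is an m×n integer matrix of full rank with H = max_{i,j}|A_{ij}|, then cond(A) = σ_max(A)/σ_min(A) ≤ n^(n/4+1/2) · m^(n/2) · H^n. -/
/-!
Let `B = AᵀA` with eigenvalues `λ₁, …, λₙ`. Full rank makes them all positive, and
`σ_max² ≤ ∑ i j, A i j ^ 2 = ∑ λ ≤ n m H²`, `σ_min² ≥ min λ`. Since `B` is an integer matrix,
`∏ λ = det B` is a positive integer, hence at least `1`; AM-GM on the other `n - 1` eigenvalues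
then gives `(n - 1) ^ (n - 1) ≤ (∑ λ) ^ (n - 1) · min λ`. So
`cond(A)² ≤ (∑ λ) ^ n / (n - 1) ^ (n - 1) ≤ n ^ n / (n - 1) ^ (n - 1) · (m H²) ^ n`, and
`n ^ n / (n - 1) ^ (n - 1) ≤ n² ≤ n ^ (n / 2 + 1)` by Bernoulli's inequality.
-/

/-- Largest singular value: the supremum of `‖A x‖` over unit vectors `x`. -/
noncomputable def sigmaMax {m n : ℕ} (A : Matrix (Fin m) (Fin n) ℝ) : ℝ :=
  sSup ((fun x : EuclideanSpace ℝ (Fin n) => ‖Matrix.toEuclideanLin A x‖) '' {x | ‖x‖ = 1})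

/-- Smallest singular value: the infimum of `‖A x‖` over unit vectors `x`. -/
noncomputable def sigmaMin {m n : ℕ} (A : Matrix (Fin m) (Fin n) ℝ) : ℝ :=
  sInf ((fun x : EuclideanSpace ℝ (Fin n) => ‖Matrix.toEuclideanLin A x‖) '' {x | ‖x‖ = 1})

/-- The maximum absolute value of the entries of an integer matrix. -/
def maxEntry {m n : ℕ} (A : Matrix (Fin m) (Fin n) ℤ) : ℕ :=
  (Finset.univ ×ˢ Finset.univ).sup fun p : Fin m × Fin n => (A p.1 p.2).natAbs

open Matrix Finset
open scoped RealInnerProductSpace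

section Spectral

variable {m n : Type*} [Fintype m] [Fintype n] [DecidableEq n]

lemma Matrix.IsHermitian.inner_toEuclideanLin_self {B : Matrix n n ℝ} (hB : B.IsHermitian)
    (x : EuclideanSpace ℝ n) :
    ⟪x, toEuclideanLin B x⟫ = ∑ j, hB.eigenvalues j * hB.eigenvectorBasis.repr x j ^ 2 := by
  have hBv (j : n) : toEuclideanLin B (hB.eigenvectorBasis j) =
      hB.eigenvalues j • hB.eigenvectorBasis j := by
    rw [toLpLin_apply, hB.mulVec_eigenvectorBasis j]
    rfl
  nth_rw 2 [← hB.eigenvectorBasis.sum_repr x]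
  simp only [map_sum, _root_.map_smul, hBv, smul_smul, inner_sum, real_inner_smul_right]
  refine sum_congr rfl fun j _ => ?_
  rw [real_inner_comm, ← OrthonormalBasis.repr_apply_apply]
  ring

lemma Matrix.IsHermitian.mul_norm_sq_le_inner {B : Matrix n n ℝ} (hB : B.IsHermitian) {c : ℝ}
    (hc : ∀ j, c ≤ hB.eigenvalues j) (x : EuclideanSpace ℝ n) :
    c * ‖x‖ ^ 2 ≤ ⟪x, toEuclideanLin B x⟫ := by
  rw [hB.inner_toEuclideanLin_self, ← hB.eigenvectorBasis.repr.norm_map x,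
    EuclideanSpace.norm_sq_eq, mul_sum]
  simp only [Real.norm_eq_abs, sq_abs]
  gcongr with j
  exact hc j

lemma Matrix.norm_toEuclideanLin_sq [DecidableEq m] (A : Matrix m n ℝ)
    (x : EuclideanSpace ℝ n) :
    ‖toEuclideanLin A x‖ ^ 2 = ⟪x, toEuclideanLin (Aᴴ * A) x⟫ := by
  rw [toLpLin_mul_same, toEuclideanLin_conjTranspose_eq_adjoint, LinearMap.comp_apply,
    LinearMap.adjoint_inner_right, real_inner_self_eq_norm_sq]

lemma Matrix.norm_toEuclideanLin_sq_le (A : Matrix m n ℝ) (x : EuclideanSpace ℝ n) :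
    ‖toEuclideanLin A x‖ ^ 2 ≤ (∑ i, ∑ j, A i j ^ 2) * ‖x‖ ^ 2 := by
  rw [EuclideanSpace.norm_sq_eq, EuclideanSpace.norm_sq_eq, sum_mul]
  gcongr with i
  simpa [Real.norm_eq_abs, sq_abs, toLpLin_apply, mulVec, dotProduct] using
    sum_mul_sq_le_sq_mul_sq univ (A i) x

lemma Matrix.sum_eigenvalues_conjTranspose_mul_self (A : Matrix m n ℝ) :
    ∑ j, (isHermitian_conjTranspose_mul_self A).eigenvalues j = ∑ i, ∑ j, A i j ^ 2 := by
  have htrace := (isHermitian_conjTranspose_mul_self A).trace_eq_sum_eigenvalues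
  simp only [RCLike.ofReal_real_eq_id, id] at htrace
  rw [← htrace, trace, sum_comm]
  simp [mul_apply, sq]

lemma Matrix.eigenvalues_conjTranspose_mul_self_pos {A : Matrix m n ℝ}
    (hA : A.rank = Fintype.card n) (j : n) :
    0 < (isHermitian_conjTranspose_mul_self A).eigenvalues j := by
  have hB := isHermitian_conjTranspose_mul_self A
  have hcard := hB.rank_eq_card_non_zero_eigs
  rw [rank_conjTranspose_mul_self, hA] at hcard
  refine (eigenvalues_conjTranspose_mul_self_nonneg A j).lt_of_ne' fun hj => ?_
  exact (Fintype.card_subtype_lt (p := fun i => hB.eigenvalues i ≠ 0) (not_not_intro hj)).ne'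
    hcard

lemma Matrix.one_le_prod_eigenvalues_conjTranspose_mul_self_map_intCast {A : Matrix m n ℤ}
    (hA : (A.map (Int.cast : ℤ → ℝ)).rank = Fintype.card n) :
    1 ≤ ∏ j, (isHermitian_conjTranspose_mul_self (A.map (Int.cast : ℤ → ℝ))).eigenvalues j := by
  have hB := isHermitian_conjTranspose_mul_self (A.map (Int.cast : ℤ → ℝ))
  have hdet : ∏ j, hB.eigenvalues j = ((Aᵀ * A).det : ℝ) := by
    have h := hB.det_eq_prod_eigenvalues
    simp only [RCLike.ofReal_real_eq_id, id] at h
    rw [← h, ← eq_intCast (Int.castRingHom ℝ), (Int.castRingHom ℝ).map_det]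
    congr 1
    ext i j
    simp [mul_apply]
  have hpos : (0 : ℝ) < (Aᵀ * A).det :=
    hdet ▸ prod_pos fun j _ => eigenvalues_conjTranspose_mul_self_pos hA j
  rw [hdet]
  exact Int.cast_one_le_of_pos (Int.cast_pos.mp hpos)

end Spectral

section SingularValues

variable {m n : ℕ}

lemma sigmaMax_le_sqrt_sum_sq (A : Matrix (Fin m) (Fin n) ℝ) :
    sigmaMax A ≤ √(∑ i, ∑ j, A i j ^ 2) := by
  refine Real.sSup_le ?_ (Real.sqrt_nonneg _)
  rintro _ ⟨x, hx : ‖x‖ = 1, rfl⟩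
  refine Real.le_sqrt_of_sq_le ?_
  simpa [hx] using A.norm_toEuclideanLin_sq_le x

lemma sqrt_le_sigmaMin [NeZero n] (A : Matrix (Fin m) (Fin n) ℝ) {c : ℝ}
    (hc : ∀ j, c ≤ (isHermitian_conjTranspose_mul_self A).eigenvalues j) :
    √c ≤ sigmaMin A := by
  refine le_csInf ⟨_, EuclideanSpace.single 0 1, by simp, rfl⟩ ?_
  rintro _ ⟨x, hx : ‖x‖ = 1, rfl⟩
  refine Real.sqrt_le_iff.mpr ⟨norm_nonneg _, ?_⟩
  simpa [hx, A.norm_toEuclideanLin_sq] using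
    (isHermitian_conjTranspose_mul_self A).mul_norm_sq_le_inner hc x

lemma sigmaMin_fin_zero (A : Matrix (Fin m) (Fin 0) ℝ) : sigmaMin A = 0 := by
  have hsphere : {x : EuclideanSpace ℝ (Fin 0) | ‖x‖ = 1} = ∅ := by
    ext x
    simp [Subsingleton.elim x 0]
  rw [sigmaMin, hsphere, Set.image_empty, Real.sInf_empty]

lemma sq_intCast_le_maxEntry_sq (A : Matrix (Fin m) (Fin n) ℤ) (i : Fin m) (j : Fin n) :
    (A i j : ℝ) ^ 2 ≤ (maxEntry A : ℝ) ^ 2 := by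
  have h : (A i j).natAbs ≤ maxEntry A :=
    le_sup (f := fun p : Fin m × Fin n => (A p.1 p.2).natAbs) (b := (i, j)) (by simp)
  rw [← sq_abs, ← Int.cast_abs, Int.abs_eq_natAbs]
  gcongr
  exact_mod_cast h

lemma sum_sq_map_intCast_le (A : Matrix (Fin m) (Fin n) ℤ) :
    ∑ i, ∑ j, A.map (Int.cast : ℤ → ℝ) i j ^ 2 ≤ n * (m * (maxEntry A : ℝ) ^ 2) :=
  calc ∑ i, ∑ j, A.map (Int.cast : ℤ → ℝ) i j ^ 2
      ≤ ∑ _i : Fin m, ∑ _j : Fin n, (maxEntry A : ℝ) ^ 2 :=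
        sum_le_sum fun i _ => sum_le_sum fun j _ => sq_intCast_le_maxEntry_sq A i j
    _ = n * (m * (maxEntry A : ℝ) ^ 2) := by
        simp only [sum_const, card_univ, Fintype.card_fin, nsmul_eq_mul]
        ring

end SingularValues

section Means

variable {ι : Type*}

lemma prod_mul_card_pow_le_sum_pow (s : Finset ι) {f : ι → ℝ} (hf : ∀ i ∈ s, 0 ≤ f i) :
    (∏ i ∈ s, f i) * (#s : ℝ) ^ #s ≤ (∑ i ∈ s, f i) ^ #s := by
  rcases s.eq_empty_or_nonempty with rfl | hs
  · simp
  have hcard : (0 : ℝ) < #s := by exact_mod_cast hs.card_pos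
  have hgm := Real.geom_mean_le_arith_mean s 1 f (fun _ _ => zero_le_one)
    (by simpa using hcard) hf
  simp only [Pi.one_apply, Real.rpow_one, sum_const, nsmul_eq_mul, mul_one, one_mul] at hgm
  rw [← le_div_iff₀ (by positivity), ← div_pow,
    ← Real.rpow_inv_natCast_pow (prod_nonneg hf) hs.card_pos.ne']
  exact pow_le_pow_left₀ (Real.rpow_nonneg (prod_nonneg hf) _) hgm _

lemma pred_pow_le_sum_pow_mul {s : Finset ι} {f : ι → ℝ} (hf : ∀ i ∈ s, 0 ≤ f i)
    (hprod : 1 ≤ ∏ i ∈ s, f i) {i : ι} (hi : i ∈ s) :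
    ((#s - 1 : ℕ) : ℝ) ^ (#s - 1) ≤ (∑ j ∈ s, f j) ^ (#s - 1) * f i := by
  classical
  have hf' : ∀ j ∈ s.erase i, 0 ≤ f j := fun j hj => hf j (mem_of_mem_erase hj)
  have hrest := prod_mul_card_pow_le_sum_pow (s.erase i) hf'
  rw [card_erase_of_mem hi] at hrest
  calc ((#s - 1 : ℕ) : ℝ) ^ (#s - 1) ≤ (∏ j ∈ s, f j) * ((#s - 1 : ℕ) : ℝ) ^ (#s - 1) :=
        le_mul_of_one_le_left (by positivity) hprod
    _ = f i * ((∏ j ∈ s.erase i, f j) * ((#s - 1 : ℕ) : ℝ) ^ (#s - 1)) := by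
        rw [← mul_prod_erase s f hi, mul_assoc]
    _ ≤ f i * (∑ j ∈ s.erase i, f j) ^ (#s - 1) := by gcongr; exact hf i hi
    _ ≤ (∑ j ∈ s, f j) ^ (#s - 1) * f i := by
        rw [mul_comm]
        refine mul_le_mul_of_nonneg_right (pow_le_pow_left₀ (sum_nonneg hf') ?_ _) (hf i hi)
        exact sum_le_sum_of_subset_of_nonneg (erase_subset i s) fun j hj _ => hf j hj

end Means

/-- Bernoulli's inequality `(1 - 1/(k+1)) ^ k ≥ 1 - k/(k+1)`, cleared of denominators. -/
lemma succ_pow_le_mul_pow (k : ℕ) : ((k : ℝ) + 1) ^ k ≤ (k + 1) * (k : ℝ) ^ k := by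
  have hk : (0 : ℝ) < k + 1 := by positivity
  have hbern := one_add_mul_le_pow (a := -1 / ((k : ℝ) + 1)) (by
    rw [neg_div, neg_le_neg_iff, div_le_iff₀ hk]; linarith) k
  have h1 : 1 + (k : ℝ) * (-1 / (k + 1)) = 1 / (k + 1) := by field_simp; ring
  have h2 : 1 + -1 / ((k : ℝ) + 1) = k / (k + 1) := by field_simp; ring
  rw [h1, h2, div_pow, div_le_div_iff₀ hk (by positivity)] at hbern
  linarith

lemma pow_le_rpow_mul_pred_pow {n : ℕ} (hn : 1 ≤ n) :
    (n : ℝ) ^ n ≤ (n : ℝ) ^ ((n : ℝ) / 2 + 1) * ((n - 1 : ℕ) : ℝ) ^ (n - 1) := by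
  rcases hn.eq_or_lt with rfl | hn2
  · norm_num
  have hsucc : (n : ℝ) = ((n - 1 : ℕ) : ℝ) + 1 := by rw [Nat.cast_pred hn]; ring
  have hsq : (n : ℝ) ^ 2 ≤ (n : ℝ) ^ ((n : ℝ) / 2 + 1) := by
    have : (2 : ℝ) ≤ n := by exact_mod_cast hn2
    rw [← Real.rpow_two]
    exact Real.rpow_le_rpow_of_exponent_le (by linarith) (by linarith)
  calc (n : ℝ) ^ n = n * (n : ℝ) ^ (n - 1) := by rw [← pow_succ', Nat.sub_add_cancel hn]
    _ ≤ n * (n * ((n - 1 : ℕ) : ℝ) ^ (n - 1)) := by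
        gcongr
        rw [hsucc]
        exact succ_pow_le_mul_pow (n - 1)
    _ = (n : ℝ) ^ 2 * ((n - 1 : ℕ) : ℝ) ^ (n - 1) := by ring
    _ ≤ (n : ℝ) ^ ((n : ℝ) / 2 + 1) * ((n - 1 : ℕ) : ℝ) ^ (n - 1) := by gcongr

lemma sum_div_le_of_one_le_prod {ι : Type*} [Fintype ι] {f : ι → ℝ} (hf : ∀ i, 0 ≤ f i)
    (hprod : 1 ≤ ∏ i, f i) {M : ℝ} (hsum : ∑ i, f i ≤ Fintype.card ι * M) (i : ι) :
    (∑ j, f j) / f i ≤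
      (Fintype.card ι : ℝ) ^ ((Fintype.card ι : ℝ) / 2 + 1) * M ^ Fintype.card ι := by
  set n := Fintype.card ι
  set F := ∑ j, f j
  have hn : 1 ≤ n := Fintype.card_pos_iff.mpr ⟨i⟩
  have hF : 0 ≤ F := sum_nonneg fun j _ => hf j
  have hM : 0 ≤ M := nonneg_of_mul_nonneg_right (hF.trans hsum) (by positivity)
  have hamgm : ((n - 1 : ℕ) : ℝ) ^ (n - 1) ≤ F ^ (n - 1) * f i := by
    simpa using pred_pow_le_sum_pow_mul (s := univ) (fun j _ => hf j) hprod (mem_univ i)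
  have hpow : (0 : ℝ) < ((n - 1 : ℕ) : ℝ) ^ (n - 1) := by exact_mod_cast Nat.pow_self_pos
  refine div_le_of_le_mul₀ (hf i) (by positivity) (le_of_mul_le_mul_right ?_ hpow)
  calc F * ((n - 1 : ℕ) : ℝ) ^ (n - 1) ≤ F * (F ^ (n - 1) * f i) := by gcongr
    _ = F ^ n * f i := by rw [← mul_assoc, ← pow_succ', Nat.sub_add_cancel hn]
    _ ≤ (n * M) ^ n * f i := by gcongr; exact hf i
    _ = (n : ℝ) ^ n * M ^ n * f i := by rw [mul_pow]
    _ ≤ (n : ℝ) ^ ((n : ℝ) / 2 + 1) * ((n - 1 : ℕ) : ℝ) ^ (n - 1) * M ^ n * f i := by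
        gcongr
        · exact hf i
        · exact pow_le_rpow_mul_pred_pow hn
    _ = (n : ℝ) ^ ((n : ℝ) / 2 + 1) * M ^ n * f i * ((n - 1 : ℕ) : ℝ) ^ (n - 1) := by ring

lemma rpow_mul_rpow_mul_pow_sq (n m : ℕ) (H : ℝ) :
    ((n : ℝ) ^ ((n : ℝ) / 4 + 1 / 2) * (m : ℝ) ^ ((n : ℝ) / 2) * H ^ n) ^ 2 =
      (n : ℝ) ^ ((n : ℝ) / 2 + 1) * ((m : ℝ) * H ^ 2) ^ n := by
  have hn : ((n : ℝ) / 4 + 1 / 2) * (2 : ℕ) = (n : ℝ) / 2 + 1 := by push_cast; ring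
  have hm : (n : ℝ) / 2 * (2 : ℕ) = n := by push_cast; ring
  rw [mul_pow, mul_pow, ← Real.rpow_mul_natCast (Nat.cast_nonneg n), hn,
    ← Real.rpow_mul_natCast (Nat.cast_nonneg m), hm, Real.rpow_natCast, mul_pow, ← pow_mul]
  ring

theorem stmt4_general {m n : ℕ} (A : Matrix (Fin m) (Fin n) ℤ)
    (hrank : (A.map (Int.cast : ℤ → ℝ)).rank = n) :
    sigmaMax (A.map (Int.cast : ℤ → ℝ)) / sigmaMin (A.map (Int.cast : ℤ → ℝ)) ≤
      (n : ℝ) ^ ((n : ℝ) / 4 + 1 / 2) * (m : ℝ) ^ ((n : ℝ) / 2) * (maxEntry A : ℝ) ^ n := by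
  rcases n.eq_zero_or_pos with rfl | hn
  · rw [sigmaMin_fin_zero, div_zero]
    positivity
  have : NeZero n := ⟨hn.ne'⟩
  set A' := A.map (Int.cast : ℤ → ℝ)
  set lam := (isHermitian_conjTranspose_mul_self A').eigenvalues
  have hrank' : A'.rank = Fintype.card (Fin n) := by rwa [Fintype.card_fin]
  obtain ⟨i, -, hi⟩ := exists_min_image univ lam univ_nonempty
  have hsum : ∑ j, lam j = ∑ i, ∑ j, A' i j ^ 2 := sum_eigenvalues_conjTranspose_mul_self A'
  have hratio : (∑ j, lam j) / lam i ≤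
      (n : ℝ) ^ ((n : ℝ) / 2 + 1) * ((m : ℝ) * (maxEntry A : ℝ) ^ 2) ^ n := by
    have h := sum_div_le_of_one_le_prod (eigenvalues_conjTranspose_mul_self_nonneg A')
      (one_le_prod_eigenvalues_conjTranspose_mul_self_map_intCast hrank')
      (by rw [Fintype.card_fin]; exact hsum.trans_le (sum_sq_map_intCast_le A)) i
    rwa [Fintype.card_fin] at h
  calc sigmaMax A' / sigmaMin A' ≤ √(∑ j, lam j) / √(lam i) :=
        div_le_div₀ (Real.sqrt_nonneg _) (hsum ▸ sigmaMax_le_sqrt_sum_sq A')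
          (Real.sqrt_pos.mpr (eigenvalues_conjTranspose_mul_self_pos hrank' i))
          (sqrt_le_sigmaMin A' fun j => hi j (mem_univ j))
    _ = √((∑ j, lam j) / lam i) :=
        (Real.sqrt_div' _ (eigenvalues_conjTranspose_mul_self_nonneg A' i)).symm
    _ ≤ √(((n : ℝ) ^ ((n : ℝ) / 4 + 1 / 2) * (m : ℝ) ^ ((n : ℝ) / 2) *
          (maxEntry A : ℝ) ^ n) ^ 2) := by
        rw [rpow_mul_rpow_mul_pow_sq]
        exact Real.sqrt_le_sqrt hratio
    _ = _ := Real.sqrt_sq (by positivity)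

/-- If `A` is an `m × n` integer matrix of full rank (`m ≥ n`), then
`cond A = σ_max(A)/σ_min(A) ≤ n^(n/4+1/2) m^(n/2) H^n` with `H = max |A i j|`. -/
theorem stmt4 {m n : ℕ} (hmn : n ≤ m) (A : Matrix (Fin m) (Fin n) ℤ)
    (hrank : (A.map (Int.cast : ℤ → ℝ)).rank = n) :
    sigmaMax (A.map (Int.cast : ℤ → ℝ)) / sigmaMin (A.map (Int.cast : ℤ → ℝ)) ≤
      (n : ℝ) ^ ((n : ℝ) / 4 + 1 / 2) * (m : ℝ) ^ ((n : ℝ) / 2) * (maxEntry A : ℝ) ^ n :=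
  stmt4_general A hrank
end

section
/- Let A be an n×n integer matrix and λ a simple eigenvalue of A with unit right eigenvector x (Ax = λx) and unit left eigenvector y (y*A = λy*). Then the eigenvalue condition number cond_NSE(A,λ) = 1/|y*x| satisfies cond_NSE(A,λ) ≤ n^(3n) · 2^(2n) · (2√n · H(A))^(2n³−2n), where H(A) = max_{i,j}|A_{ij}|. -/
open Polynomial Matrix IntermediateField

namespace Matrix

section CommRing

variable {ι R : Type*} [Fintype ι] [DecidableEq ι] [CommRing R]

theorem charmatrix_map_eval (B : Matrix ι ι R) (t : R) :
    B.charmatrix.map (eval t) = scalar ι t - B := by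
  ext i j
  obtain rfl | hij := eq_or_ne i j <;> simp [*]

theorem charmatrix_mulVec_of_mulVec_eq_smul {B : Matrix ι ι R} {t : R} {x : ι → R}
    (h : B *ᵥ x = t • x) :
    B.charmatrix *ᵥ (C ∘ x) = (X - C t) • (C ∘ x) := by
  have hC : (C : R →+* R[X]).mapMatrix B *ᵥ (C ∘ x) = C ∘ (t • x) := by
    rw [← h]; funext i; exact (RingHom.map_mulVec C B x i).symm
  rw [charmatrix, sub_mulVec, hC, scalar_apply]
  funext i
  simp only [Pi.sub_apply, mulVec_diagonal, Function.comp_apply, Pi.smul_apply, smul_eq_mul,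
    map_mul]
  ring

/-- Differentiate `(X - t) • adj (X - B) x = charpoly B • x` at `X = t`. -/
theorem adjugate_scalar_sub_mulVec_of_mulVec_eq_smul {B : Matrix ι ι R} {t : R} {x : ι → R}
    (h : B *ᵥ x = t • x) :
    (scalar ι t - B).adjugate *ᵥ x = (derivative B.charpoly).eval t • x := by
  set v := B.charmatrix.adjugate *ᵥ (C ∘ x)
  have hv : (X - C t) • v = B.charpoly • (C ∘ x) := by
    rw [← mulVec_smul, ← charmatrix_mulVec_of_mulVec_eq_smul h, mulVec_mulVec,
      adjugate_mul, smul_mulVec, one_mulVec, charpoly]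
  have heval : ∀ i, (v i).eval t = ((scalar ι t - B).adjugate *ᵥ x) i := by
    intro i
    rw [← coe_evalRingHom, RingHom.map_mulVec, ← RingHom.mapMatrix_apply, RingHom.map_adjugate,
      RingHom.mapMatrix_apply, coe_evalRingHom, charmatrix_map_eval]
    simp [Function.comp_def]
  ext i
  have hi := congrArg (fun q => (derivative q).eval t) (congrFun hv i)
  simp only [Pi.smul_apply, smul_eq_mul, Function.comp_apply, derivative_mul, derivative_sub,
    derivative_X, derivative_C, eval_add, eval_mul, eval_sub, eval_X, eval_C, sub_self, zero_mul,
    mul_zero, add_zero, sub_zero, one_mul] at hi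
  rw [← heval, hi, Pi.smul_apply, smul_eq_mul]

theorem vecMul_adjugate_scalar_sub_of_vecMul_eq_smul {B : Matrix ι ι R} {t : R} {y : ι → R}
    (h : y ᵥ* B = t • y) :
    y ᵥ* (scalar ι t - B).adjugate = (derivative B.charpoly).eval t • y := by
  rw [← mulVec_transpose] at h
  rw [← mulVec_transpose, adjugate_transpose, transpose_sub, scalar_apply, diagonal_transpose,
    ← scalar_apply, adjugate_scalar_sub_mulVec_of_mulVec_eq_smul h, charpoly_transpose]

end CommRing

section Field

variable {ι K : Type*} [Fintype ι] [DecidableEq ι] [Field K]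

/-- Replacing row `j` of `M` by `eᵢ` gives an invertible matrix `U` (its determinant is
`adj M i j`), and `U v = vᵢ eⱼ` for every `v ∈ ker M`. -/
theorem exists_forall_mulVec_eq_zero_eq_smul {M : Matrix ι ι K} {i j : ι}
    (h : M.adjugate i j ≠ 0) : ∃ w : ι → K, ∀ v, M *ᵥ v = 0 → v = v i • w := by
  set U := M.updateRow j (Pi.single i 1)
  have hU : IsUnit U.det := by rw [← adjugate_apply]; exact h.isUnit
  refine ⟨U⁻¹ *ᵥ Pi.single j 1, fun v hv => ?_⟩
  have hUv : U *ᵥ v = v i • Pi.single j 1 := by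
    funext a
    obtain rfl | ha := eq_or_ne a j
    · simp [U, mulVec, dotProduct, Pi.single_apply]
    · have hva := congrFun hv a
      simp only [mulVec, dotProduct, Pi.zero_apply] at hva
      simp [U, mulVec, dotProduct, hva, ha]
  conv_lhs => rw [← one_mulVec v, ← nonsing_inv_mul U hU, ← mulVec_mulVec, hUv, mulVec_smul]

/-- `adj M = c x zᵀ / (z ⬝ᵥ x)`: the columns of `adj M` lie in `ker M`, which is a line. -/
theorem adjugate_apply_mul_dotProduct {M : Matrix ι ι K} (hdet : M.det = 0)
    (hadj : M.adjugate ≠ 0) {x z : ι → K} {c : K} (hx : M *ᵥ x = 0)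
    (hz : z ᵥ* M.adjugate = c • z) (i j : ι) :
    M.adjugate i j * (z ⬝ᵥ x) = c * (x i * z j) := by
  obtain ⟨i₀, j₀, h₀⟩ : ∃ i₀ j₀, M.adjugate i₀ j₀ ≠ 0 := by
    by_contra! h; exact hadj (ext h)
  obtain ⟨w, hw⟩ := exists_forall_mulVec_eq_zero_eq_smul h₀
  have hcol : ∀ k l, M.adjugate k l = M.adjugate i₀ l * w k := by
    intro k l
    have hMcol : M *ᵥ (fun k => M.adjugate k l) = 0 := by
      funext a
      simpa [hdet, mul_apply, mulVec, dotProduct] using congrFun (congrFun (mul_adjugate M) a) l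
    simpa [mul_comm] using congrFun (hw _ hMcol) k
  have hrow : ∀ l, M.adjugate i₀ l * (z ⬝ᵥ w) = c * z l := by
    intro l
    have hzl := congrFun hz l
    rw [Pi.smul_apply, smul_eq_mul] at hzl
    rw [← hzl, vecMul, dotProduct, dotProduct, Finset.mul_sum]
    refine Finset.sum_congr rfl fun k _ => ?_
    rw [hcol k l]; ring
  have hxw := hw x hx
  rw [hxw, dotProduct_smul, hcol, smul_eq_mul, Pi.smul_apply, smul_eq_mul]
  linear_combination (x i₀ * w i) * hrow j

end Field

section NormedField

variable {ι K : Type*} [Fintype ι] [DecidableEq ι] [NormedField K]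

theorem norm_le_card_mul_of_isRoot_charpoly {B : Matrix ι ι K} {H : ℝ} (hB : ∀ i j, ‖B i j‖ ≤ H)
    {μ : K} (hμ : B.charpoly.IsRoot μ) : ‖μ‖ ≤ Fintype.card ι * H := by
  rw [← charpoly_toLin', ← Module.End.hasEigenvalue_iff_isRoot_charpoly] at hμ
  obtain ⟨k, hk⟩ := eigenvalue_mem_ball hμ
  rw [Metric.mem_closedBall, dist_eq_norm] at hk
  calc ‖μ‖ ≤ ‖B k k‖ + ‖μ - B k k‖ := norm_le_norm_add_norm_sub' μ (B k k)
    _ ≤ ∑ j, ‖B k j‖ := by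
      rw [← Finset.add_sum_erase _ _ (Finset.mem_univ k)]; gcongr
    _ ≤ Fintype.card ι * H := by
      simpa using Finset.sum_le_card_nsmul Finset.univ _ H fun j _ => hB k j

theorem norm_adjugate_apply_le {M : Matrix ι ι K} {E : ℝ} (hE : 1 ≤ E)
    (hM : ∀ i j, ‖M i j‖ ≤ E) (i j : ι) :
    ‖M.adjugate i j‖ ≤ (Fintype.card ι).factorial * E ^ Fintype.card ι := by
  have hU : ∀ a b, ‖M.updateRow j (Pi.single i 1) a b‖ ≤ E := by
    intro a b
    obtain rfl | ha := eq_or_ne a j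
    · rw [updateRow_self, Pi.single_apply]
      split_ifs <;> simp [hE, zero_le_one.trans hE]
    · rw [updateRow_ne ha]; exact hM a b
  rw [adjugate_apply, ← nsmul_eq_mul]
  exact det_le (abv := IsAbsoluteValue.toAbsoluteValue (norm : K → ℝ)) hU

theorem norm_scalar_sub_apply_le {B : Matrix ι ι K} {H : ℝ} (hB : ∀ i j, ‖B i j‖ ≤ H) (t : K)
    (i j : ι) :
    ‖(scalar ι t - B) i j‖ ≤ ‖t‖ + H := by
  rw [sub_apply, scalar_apply, diagonal_apply]
  refine (norm_sub_le _ _).trans (add_le_add ?_ (hB i j))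
  split_ifs <;> simp

end NormedField

end Matrix

theorem Polynomial.eval_derivative_ne_zero_of_rootMultiplicity_eq_one {R : Type*} [CommRing R]
    {p : R[X]} {t : R} (h : p.rootMultiplicity t = 1) : (derivative p).eval t ≠ 0 := by
  obtain ⟨hp, ht⟩ := rootMultiplicity_pos'.mp (h ▸ one_pos)
  intro hd
  have := (one_lt_rootMultiplicity_iff_isRoot hp).mpr ⟨ht, hd⟩
  omega

theorem Polynomial.norm_eval_derivative_le_of_mem_roots {p : ℂ[X]} (hp : p.Monic) {R : ℝ}
    (hR : ∀ w ∈ p.roots, ‖w‖ ≤ R) {μ : ℂ} (hμ : μ ∈ p.roots) :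
    ‖(derivative p).eval μ‖ ≤ (2 * R) ^ (p.natDegree - 1) := by
  classical
  have hsplit := IsAlgClosed.splits p
  rw [hsplit.eval_root_derivative hp hμ, hsplit.natDegree_eq_card_roots,
    ← Nat.pred_eq_sub_one, ← Multiset.card_erase_of_mem hμ, ← Multiset.card_map (μ - ·)]
  refine (map_multiset_prod (normHom : ℂ →*₀ ℝ) _).trans_le
    (Multiset.prod_map_le_pow_card (fun z _ => norm_nonneg z) fun z hz => ?_)
  obtain ⟨w, hw, rfl⟩ := Multiset.mem_map.mp hz
  calc ‖μ - w‖ ≤ ‖μ‖ + ‖w‖ := norm_sub_le μ w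
    _ ≤ 2 * R := by linarith [hR μ hμ, hR w (Multiset.mem_of_mem_erase hw)]

/-- `q(g)` is a nonzero algebraic integer, so the product of its conjugates `q(σ g)`, its norm,
is a nonzero rational integer. -/
theorem one_le_norm_aeval_algHom_mul_pow_finrank {K : Type*} [Field K] [Algebra ℚ K]
    [FiniteDimensional ℚ K] {p q : ℤ[X]} (hp : p.Monic) {g : K} (hg : aeval g p = 0)
    (hq : aeval g q ≠ 0) (τ : K →ₐ[ℚ] ℂ) {F : ℝ}
    (hbound : ∀ μ : ℂ, aeval μ p = 0 → ‖aeval μ q‖ ≤ F) :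
    1 ≤ ‖aeval (τ g) q‖ * F ^ (Module.finrank ℚ K - 1) := by
  classical
  have hσ (σ : K →ₐ[ℚ] ℂ) (r : ℤ[X]) : σ (aeval g r) = aeval (σ g) r := by
    simpa using (aeval_algHom_apply (σ.restrictScalars ℤ) g r).symm
  have hu : IsIntegral ℤ (aeval g q) := .of_mem_of_fg (Algebra.adjoin ℤ {g})
    (IsIntegral.fg_adjoin_singleton ⟨p, hp, by rwa [← aeval_def]⟩) _
    (aeval_mem_adjoin_singleton _ _)
  obtain ⟨z, hz⟩ := IsIntegrallyClosed.isIntegral_iff.mp (Algebra.isIntegral_norm ℚ hu)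
  have hz0 : z ≠ 0 := by
    rintro rfl
    exact Algebra.norm_ne_zero_iff.mpr hq (by rw [← hz, map_zero])
  calc (1 : ℝ) ≤ ‖(z : ℂ)‖ := by rw [Complex.norm_intCast]; exact_mod_cast Int.one_le_abs hz0
    _ = ∏ σ : K →ₐ[ℚ] ℂ, ‖aeval (σ g) q‖ := by
      simp_rw [← hσ, ← norm_prod, ← Algebra.norm_eq_prod_embeddings, ← hz, eq_intCast,
        eq_ratCast, Rat.cast_intCast]
    _ = ‖aeval (τ g) q‖ * ∏ σ ∈ Finset.univ.erase τ, ‖aeval (σ g) q‖ :=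
      (Finset.mul_prod_erase _ (fun σ => ‖aeval (σ g) q‖) (Finset.mem_univ τ)).symm
    _ ≤ ‖aeval (τ g) q‖ * ∏ σ ∈ Finset.univ.erase τ, F := by
      gcongr with σ
      exact hbound _ (by rw [← hσ, hg, map_zero])
    _ = ‖aeval (τ g) q‖ * F ^ (Module.finrank ℚ K - 1) := by
      rw [Finset.prod_const, Finset.card_erase_of_mem (Finset.mem_univ τ), Finset.card_univ,
        AlgHom.card]

theorem Polynomial.one_le_norm_aeval_mul_pow_of_forall_isRoot {p q : ℤ[X]} (hp : p.Monic)
    {α : ℂ} (hα : aeval α p = 0) (hq : aeval α q ≠ 0) {F : ℝ} (hF : 1 ≤ F)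
    (hbound : ∀ μ : ℂ, aeval μ p = 0 → ‖aeval μ q‖ ≤ F) :
    1 ≤ ‖aeval α q‖ * F ^ (p.natDegree - 1) := by
  have hαℚ : IsIntegral ℚ α := (show IsIntegral ℤ α from ⟨p, hp, by rwa [← aeval_def]⟩).tower_top
  have : FiniteDimensional ℚ ℚ⟮α⟯ := adjoin.finiteDimensional hαℚ
  set g : ℚ⟮α⟯ := AdjoinSimple.gen ℚ α
  have hg (r : ℤ[X]) : algebraMap ℚ⟮α⟯ ℂ (aeval g r) = aeval α r := by
    rw [← aeval_algebraMap_apply, AdjoinSimple.algebraMap_gen]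
  have hdeg : Module.finrank ℚ ℚ⟮α⟯ ≤ p.natDegree := by
    rw [adjoin.finrank hαℚ]
    refine (natDegree_le_of_dvd (minpoly.dvd ℚ α ?_) (hp.map (algebraMap ℤ ℚ)).ne_zero).trans
      natDegree_map_le
    rwa [aeval_map_algebraMap]
  calc 1 ≤ ‖aeval (ℚ⟮α⟯.val g) q‖ * F ^ (Module.finrank ℚ ℚ⟮α⟯ - 1) :=
        one_le_norm_aeval_algHom_mul_pow_finrank hp
          ((algebraMap ℚ⟮α⟯ ℂ).injective (by rw [hg, hα, map_zero]))
          (fun h => hq (by rw [← hg, h, map_zero])) _ hbound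
    _ = ‖aeval α q‖ * F ^ (Module.finrank ℚ ℚ⟮α⟯ - 1) := rfl
    _ ≤ ‖aeval α q‖ * F ^ (p.natDegree - 1) := by gcongr

theorem exists_one_le_sqrt_card_mul_norm {ι : Type*} [Fintype ι] {x : ι → ℂ}
    (hx : ∑ i, Complex.normSq (x i) = 1) : ∃ i, 1 ≤ √(Fintype.card ι) * ‖x i‖ := by
  have : Nonempty ι := by
    by_contra! h
    simp at hx
  obtain ⟨i, -, hi⟩ := Finset.exists_max_image Finset.univ (fun i => ‖x i‖ ^ 2)
    Finset.univ_nonempty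
  refine ⟨i, (one_le_sq_iff₀ (by positivity)).mp ?_⟩
  rw [mul_pow, Real.sq_sqrt (Nat.cast_nonneg _)]
  simpa [← hx, Complex.sq_norm] using Finset.sum_le_card_nsmul Finset.univ _ _ hi

/-- With `c = (charpoly B)' t` we have `adj (t - B) = c x y* / (y* x)`; compare the entries at
coordinates where `|xᵢ|², |yⱼ|² ≥ 1 / n`. -/
theorem Matrix.norm_eval_derivative_charpoly_le {ι : Type*} [Fintype ι] [DecidableEq ι]
    {B : Matrix ι ι ℂ} {t : ℂ} {x y : ι → ℂ} (hx : ∑ i, Complex.normSq (x i) = 1)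
    (hy : ∑ i, Complex.normSq (y i) = 1) (hright : B *ᵥ x = t • x)
    (hleft : star y ᵥ* B = t • star y) {H : ℝ} (hH : 1 ≤ H) (hB : ∀ i j, ‖B i j‖ ≤ H) :
    ‖(derivative B.charpoly).eval t‖ ≤
      Fintype.card ι * (Fintype.card ι).factorial * (2 * Fintype.card ι * H) ^ Fintype.card ι *
        ‖∑ i, starRingEnd ℂ (y i) * x i‖ := by
  set n := Fintype.card ι
  set M := scalar ι t - B
  set c := (derivative B.charpoly).eval t
  rcases eq_or_ne c 0 with hc | hc
  · rw [hc, norm_zero]; positivity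
  obtain ⟨i, hi⟩ := exists_one_le_sqrt_card_mul_norm hx
  obtain ⟨j, hj⟩ := exists_one_le_sqrt_card_mul_norm hy
  have hn : (1 : ℝ) ≤ n := by exact_mod_cast Fintype.card_pos_iff.mpr ⟨i⟩
  have hx0 : x ≠ 0 := by rintro rfl; simp at hx
  have hMx : M *ᵥ x = 0 := by
    rw [sub_mulVec, hright, sub_eq_zero]
    ext i
    simp [mulVec_diagonal]
  have hdet : M.det = 0 := exists_mulVec_eq_zero_iff.mp ⟨x, hx0, hMx⟩
  have hadj : M.adjugate ≠ 0 := fun h => by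
    have hadjx := adjugate_scalar_sub_mulVec_of_mulVec_eq_smul hright
    rw [h, zero_mulVec, eq_comm, smul_eq_zero] at hadjx
    exact hadjx.elim hc hx0
  have ht : ‖t‖ ≤ n * H := norm_le_card_mul_of_isRoot_charpoly hB (by rwa [IsRoot, eval_charpoly])
  have hM (k l : ι) : ‖M k l‖ ≤ 2 * n * H :=
    (norm_scalar_sub_apply_le hB t k l).trans (by nlinarith)
  have hij := congrArg norm (adjugate_apply_mul_dotProduct hdet hadj hMx
    (vecMul_adjugate_scalar_sub_of_vecMul_eq_smul hleft) i j)
  simp only [norm_mul, Pi.star_apply, norm_star] at hij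
  calc ‖c‖ ≤ ‖c‖ * ((√n * ‖x i‖) * (√n * ‖y j‖)) :=
        le_mul_of_one_le_right (norm_nonneg c) (one_le_mul_of_one_le_of_one_le hi hj)
    _ = n * ‖M.adjugate i j‖ * ‖star y ⬝ᵥ x‖ := by
        rw [mul_assoc _ ‖M.adjugate i j‖, hij, mul_mul_mul_comm, Real.mul_self_sqrt (by positivity)]
        ring
    _ ≤ n * (n.factorial * (2 * n * H) ^ n) * ‖star y ⬝ᵥ x‖ := by
        gcongr; exact norm_adjugate_apply_le (by nlinarith) hM i j
    _ = _ := by simp [dotProduct, mul_assoc]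

theorem Matrix.one_le_norm_eval_derivative_charpoly_mul_pow {ι : Type*} [Fintype ι]
    [DecidableEq ι] {A : Matrix ι ι ℤ} {H : ℝ} (hH : 1 ≤ H)
    (hA : ∀ i j, ‖(A.map (Int.cast : ℤ → ℂ)) i j‖ ≤ H) {t : ℂ}
    (ht : (A.map (Int.cast : ℤ → ℂ)).charpoly.rootMultiplicity t = 1) :
    1 ≤ ‖(derivative (A.map (Int.cast : ℤ → ℂ)).charpoly).eval t‖ *
      (2 * Fintype.card ι * H) ^ ((Fintype.card ι - 1) * (Fintype.card ι - 1)) := by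
  set n := Fintype.card ι
  set B := A.map (Int.cast : ℤ → ℂ)
  have hB : B.charpoly = A.charpoly.map (Int.castRingHom ℂ) := by
    rw [← charpoly_map, Int.coe_castRingHom]
  have haeval (μ : ℂ) : aeval μ A.charpoly = B.charpoly.eval μ := by
    rw [hB, eval_map, aeval_def]; rfl
  have haeval' (μ : ℂ) : aeval μ (derivative A.charpoly) = (derivative B.charpoly).eval μ := by
    rw [hB, derivative_map, eval_map, aeval_def]; rfl
  have hF : 1 ≤ (2 * n * H) ^ (n - 1) := by
    rcases Nat.eq_zero_or_pos n with hn | hn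
    · simp [hn]
    · exact one_le_pow₀ (by nlinarith [(Nat.one_le_cast (α := ℝ)).mpr hn])
  have hroots (w : ℂ) (hw : w ∈ B.charpoly.roots) : ‖w‖ ≤ n * H :=
    norm_le_card_mul_of_isRoot_charpoly hA (isRoot_of_mem_roots hw)
  have hbound (μ : ℂ) (hμ : aeval μ A.charpoly = 0) :
      ‖aeval μ (derivative A.charpoly)‖ ≤ (2 * n * H) ^ (n - 1) := by
    rw [haeval']
    have := norm_eval_derivative_le_of_mem_roots B.charpoly_monic hroots
      ((mem_roots B.charpoly_monic.ne_zero).mpr ((haeval μ).symm.trans hμ))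
    rwa [charpoly_natDegree_eq_dim, ← mul_assoc] at this
  have := one_le_norm_aeval_mul_pow_of_forall_isRoot A.charpoly_monic
    ((haeval t).trans (rootMultiplicity_pos'.mp (ht ▸ one_pos)).2)
    ((haeval' t).trans_ne (eval_derivative_ne_zero_of_rootMultiplicity_eq_one ht)) hF hbound
  rwa [haeval', charpoly_natDegree_eq_dim, ← pow_mul] at this

theorem norm_apply_le_maxEntry {n : ℕ} (A : Matrix (Fin n) (Fin n) ℤ) (i j : Fin n) :
    ‖(A.map (Int.cast : ℤ → ℂ)) i j‖ ≤ maxEntry A := by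
  rw [Matrix.map_apply, Complex.norm_intCast, ← Int.cast_abs, ← Nat.cast_natAbs]
  exact_mod_cast Finset.le_sup (f := fun p : Fin n × Fin n => (A p.1 p.2).natAbs)
    (Finset.mem_univ (i, j))

theorem one_le_maxEntry_of_rootMultiplicity_eq_one {n : ℕ} (hn : 2 ≤ n)
    {A : Matrix (Fin n) (Fin n) ℤ} {t : ℂ}
    (h : (A.map (Int.cast : ℤ → ℂ)).charpoly.rootMultiplicity t = 1) : 1 ≤ maxEntry A := by
  by_contra! hA
  have hA0 : A.map (Int.cast : ℤ → ℂ) = 0 := by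
    ext i j
    simpa [Nat.lt_one_iff.mp hA] using norm_apply_le_maxEntry A i j
  rw [hA0, Matrix.charpoly_zero, Fintype.card_fin] at h
  obtain rfl | ht := eq_or_ne t 0
  · rw [← sub_zero X, ← C_0, rootMultiplicity_X_sub_C_pow] at h
    omega
  · exact absurd h (by simp [rootMultiplicity_eq_zero, ht])

theorem card_mul_factorial_mul_pow_le {n : ℕ} (hn : 2 ≤ n) {H : ℝ} (hH : 1 ≤ H) :
    n * n.factorial * (2 * n * H) ^ n * (2 * n * H) ^ ((n - 1) * (n - 1)) ≤
      (n : ℝ) ^ (3 * n) * 2 ^ (2 * n) * (2 * Real.sqrt n * H) ^ (2 * n ^ 3 - 2 * n) := by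
  have hn1 : (1 : ℝ) ≤ n := by exact_mod_cast one_le_two.trans hn
  have hfact : n * n.factorial ≤ n ^ (3 * n) :=
    calc n * n.factorial ≤ n * n ^ n := Nat.mul_le_mul_left n n.factorial_le_pow
      _ = n ^ (n + 1) := by ring
      _ ≤ n ^ (3 * n) := Nat.pow_le_pow_right (by omega) (by omega)
  have hG : 1 ≤ 2 * Real.sqrt n * H := by nlinarith [Real.one_le_sqrt.mpr hn1]
  have hE : 2 * n * H ≤ (2 * Real.sqrt n * H) ^ 2 := by
    rw [mul_pow, mul_pow, Real.sq_sqrt (by positivity)]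
    nlinarith [mul_nonneg (mul_nonneg (Nat.cast_nonneg n) (zero_le_one.trans hH))
      (by linarith : (0 : ℝ) ≤ 2 * H - 1)]
  have hexp : 2 * (n + (n - 1) * (n - 1)) ≤ 2 * n ^ 3 - 2 * n := by
    obtain ⟨m, rfl⟩ := Nat.exists_eq_add_of_le' hn
    rw [show m + 2 - 1 = m + 1 by omega]
    apply Nat.le_sub_of_add_le
    nlinarith [Nat.zero_le m]
  calc (n : ℝ) * n.factorial * (2 * n * H) ^ n * (2 * n * H) ^ ((n - 1) * (n - 1))
      = (n * n.factorial : ℕ) * (2 * n * H) ^ (n + (n - 1) * (n - 1)) := by push_cast; ring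
    _ ≤ (n : ℝ) ^ (3 * n) * ((2 * Real.sqrt n * H) ^ 2) ^ (n + (n - 1) * (n - 1)) := by
      gcongr; exact_mod_cast hfact
    _ ≤ (n : ℝ) ^ (3 * n) * (2 * Real.sqrt n * H) ^ (2 * n ^ 3 - 2 * n) := by
      rw [← pow_mul]; gcongr
    _ ≤ (n : ℝ) ^ (3 * n) * 2 ^ (2 * n) * (2 * Real.sqrt n * H) ^ (2 * n ^ 3 - 2 * n) := by
      gcongr; exact le_mul_of_one_le_right (by positivity) (one_le_pow₀ one_le_two)

theorem one_div_norm_sum_conj_mul_eq_one {x y : Fin 1 → ℂ}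
    (hx : ∑ i, Complex.normSq (x i) = 1) (hy : ∑ i, Complex.normSq (y i) = 1) :
    1 / ‖∑ i, starRingEnd ℂ (y i) * x i‖ = 1 := by
  simp only [Fin.sum_univ_one, ← Complex.sq_norm] at hx hy
  rw [Fin.sum_univ_one, norm_mul, Complex.norm_conj,
    (pow_eq_one_iff_of_nonneg (norm_nonneg _) two_ne_zero).mp hx,
    (pow_eq_one_iff_of_nonneg (norm_nonneg _) two_ne_zero).mp hy]
  norm_num

/-- Let `A` be an `n × n` integer matrix and `λ` a simple eigenvalue of `A` with unit right
eigenvector `x` and unit left eigenvector `y`.  Then the eigenvalue condition number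
`1/|y*x| ≤ n^(3n) 2^(2n) (2√n H(A))^(2n³-2n)` where `H(A) = max |A i j|`. -/
theorem stmt6 {n : ℕ} (A : Matrix (Fin n) (Fin n) ℤ) (lam : ℂ)
    (hsimple : ((A.map (Int.cast : ℤ → ℂ)).charpoly).rootMultiplicity lam = 1)
    (x y : Fin n → ℂ)
    (hx : ∑ i, Complex.normSq (x i) = 1) (hy : ∑ i, Complex.normSq (y i) = 1)
    (hright : (A.map (Int.cast : ℤ → ℂ)).mulVec x = lam • x)
    (hleft : Matrix.vecMul (star y) (A.map (Int.cast : ℤ → ℂ)) = lam • star y) :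
    1 / ‖∑ i, (starRingEnd ℂ) (y i) * x i‖ ≤
      (n : ℝ) ^ (3 * n) * 2 ^ (2 * n) *
        (2 * Real.sqrt n * (maxEntry A : ℝ)) ^ (2 * n ^ 3 - 2 * n) := by
  set S := ∑ i, (starRingEnd ℂ) (y i) * x i
  rcases eq_or_ne S 0 with hS | hS
  · rw [hS, norm_zero, div_zero]; positivity
  obtain rfl | hn : n = 1 ∨ 2 ≤ n := by
    rcases n with _ | _ | n
    · simp at hx
    all_goals omega
  · rw [one_div_norm_sum_conj_mul_eq_one hx hy]; norm_num
  have hH : (1 : ℝ) ≤ maxEntry A := by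
    exact_mod_cast one_le_maxEntry_of_rootMultiplicity_eq_one hn hsimple
  have hupper := norm_eval_derivative_charpoly_le hx hy hright hleft hH (norm_apply_le_maxEntry A)
  have hlower := one_le_norm_eval_derivative_charpoly_mul_pow hH (norm_apply_le_maxEntry A) hsimple
  simp only [Fintype.card_fin] at hupper hlower
  rw [div_le_iff₀ (norm_pos_iff.mpr hS)]
  calc 1 ≤ _ := hlower
    _ ≤ n * n.factorial * (2 * n * maxEntry A) ^ n * ‖S‖ *
          (2 * n * maxEntry A) ^ ((n - 1) * (n - 1)) := by gcongr
    _ = n * n.factorial * (2 * n * maxEntry A) ^ n * (2 * n * maxEntry A) ^ ((n - 1) * (n - 1)) *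
          ‖S‖ := by ring
    _ ≤ _ := mul_le_mul_of_nonneg_right (card_mul_factorial_mul_pow_le hn hH) (norm_nonneg S)
end

section
/- Let B be an n×n integer matrix and q(t) = det(B − tI + t·e_n e_n*) = Σ q_i t^i (i.e., the variable t is removed from the (n,n) diagonal entry). Then max_i |q_i| ≤ 2·(2√n · max_{i,j}|B_{ij}|)^n. -/
/-!
On the circle `|z| = a`, where `a = max |B i j|`, every entry of `B - z I + z eₙ eₙ*` has modulus at
most `2 a`, so the elementary Hadamard bound `|det A| ≤ (√n c)^n` for entries bounded by `c` gives
`|q z| ≤ (2 √n a)^n` there. Cauchy's estimate turns this into `|q i| a^i ≤ (2 √n a)^n`, and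
`a ≥ 1` unless `B = 0`, in which case the last row vanishes and `q = 0`.
-/

open Polynomial Matrix Finset Metric
open scoped ComplexOrder

theorem Real.prod_le_sum_div_card_pow {ι : Type*} [Fintype ι] (x : ι → ℝ) (hx : ∀ i, 0 ≤ x i) :
    ∏ i, x i ≤ ((∑ i, x i) / Fintype.card ι) ^ Fintype.card ι := by
  rcases isEmpty_or_nonempty ι with hι | hι
  · simp
  have hm : (0 : ℝ) < Fintype.card ι := by exact_mod_cast Fintype.card_pos
  have hP : 0 ≤ ∏ i, x i := prod_nonneg fun i _ => hx i
  have amgm := Real.geom_mean_le_arith_mean univ (fun _ => 1) x (fun _ _ => zero_le_one)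
    (by simpa using hm) (fun i _ => hx i)
  simp only [Real.rpow_one, one_mul, sum_const, card_univ, nsmul_eq_mul, mul_one] at amgm
  calc ∏ i, x i = ((∏ i, x i) ^ ((Fintype.card ι : ℝ)⁻¹)) ^ Fintype.card ι := by
        rw [← Real.rpow_natCast, ← Real.rpow_mul hP, inv_mul_cancel₀ hm.ne', Real.rpow_one]
    _ ≤ _ := by gcongr

theorem Polynomial.iteratedDeriv_eval {𝕜 : Type*} [NontriviallyNormedField 𝕜] (p : 𝕜[X]) (k : ℕ) :
    iteratedDeriv k (fun x => p.eval x) = fun x => (derivative^[k] p).eval x := by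
  induction k with
  | zero => simp
  | succ k ih =>
    rw [iteratedDeriv_succ, ih]
    ext x
    rw [Function.iterate_succ_apply']
    exact Polynomial.deriv _

theorem Polynomial.norm_coeff_mul_pow_le {p : ℂ[X]} {R C : ℝ} (hR : 0 < R)
    (hC : ∀ z ∈ sphere (0 : ℂ) R, ‖p.eval z‖ ≤ C) (i : ℕ) :
    ‖p.coeff i‖ * R ^ i ≤ C := by
  have cauchy := Complex.norm_iteratedDeriv_le_of_forall_mem_sphere_norm_le i hR
    p.differentiable.diffContOnCl hC
  have hcoeff : iteratedDeriv i (fun x => p.eval x) 0 = i.factorial * p.coeff i := by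
    rw [iteratedDeriv_eval]
    dsimp only
    rw [← coeff_zero_eq_eval_zero, coeff_iterate_derivative, zero_add,
      Nat.descFactorial_self, nsmul_eq_mul]
  rw [hcoeff, norm_mul, Complex.norm_natCast, le_div_iff₀ (by positivity), mul_assoc] at cauchy
  exact le_of_mul_le_mul_left cauchy (by positivity)

namespace Matrix

variable {𝕜 ι : Type*} [RCLike 𝕜] [Fintype ι] [DecidableEq ι]

omit [DecidableEq ι] in
theorem trace_mul_conjTranspose_self_eq_sum_norm_sq (A : Matrix ι ι 𝕜) :
    (A * Aᴴ).trace = ((∑ i, ∑ j, ‖A i j‖ ^ 2 : ℝ) : 𝕜) := by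
  simp only [trace, diag_apply, mul_apply, conjTranspose_apply, RCLike.star_def,
    RCLike.mul_conj]
  push_cast
  rfl

theorem norm_det_le_of_forall_norm_le (A : Matrix ι ι 𝕜) {c : ℝ} (hc : ∀ i j, ‖A i j‖ ≤ c) :
    ‖A.det‖ ≤ (√(Fintype.card ι) * c) ^ Fintype.card ι := by
  rcases isEmpty_or_nonempty ι with hι | hι
  · simp
  set m := Fintype.card ι
  have hc0 : 0 ≤ c := (norm_nonneg _).trans (hc hι.some hι.some)
  have hpsd := posSemidef_self_mul_conjTranspose A
  set μ := hpsd.isHermitian.eigenvalues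
  have hμ : ∀ i, 0 ≤ μ i := hpsd.eigenvalues_nonneg
  have norm_det_sq : ‖A.det‖ ^ 2 = ∏ i, μ i := by
    have h := hpsd.isHermitian.det_eq_prod_eigenvalues
    rw [det_mul, det_conjTranspose, RCLike.star_def, RCLike.mul_conj] at h
    exact_mod_cast h
  have sum_eigenvalues : ∑ i, μ i = ∑ i, ∑ j, ‖A i j‖ ^ 2 := by
    have h := hpsd.isHermitian.trace_eq_sum_eigenvalues
    rw [trace_mul_conjTranspose_self_eq_sum_norm_sq] at h
    exact_mod_cast h.symm
  have sum_le : ∑ i, μ i ≤ m * (m * c ^ 2) := by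
    rw [sum_eigenvalues]
    calc ∑ i, ∑ j, ‖A i j‖ ^ 2 ≤ ∑ _i : ι, ∑ _j : ι, c ^ 2 := by gcongr with i _ j; exact hc i j
      _ = m * (m * c ^ 2) := by simp [m]
  have hm : (0 : ℝ) < m := by exact_mod_cast Fintype.card_pos
  refine (pow_le_pow_iff_left₀ (norm_nonneg _) (by positivity) two_ne_zero).mp ?_
  calc ‖A.det‖ ^ 2 = ∏ i, μ i := norm_det_sq
    _ ≤ ((∑ i, μ i) / m) ^ m := Real.prod_le_sum_div_card_pow μ hμ
    _ ≤ (m * c ^ 2) ^ m := by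
      gcongr
      · exact div_nonneg (sum_nonneg fun i _ => hμ i) hm.le
      · rwa [div_le_iff₀ hm, mul_comm]
    _ = ((√m * c) ^ m) ^ 2 := by
      rw [← pow_mul, mul_comm m 2, pow_mul, mul_pow (√(m : ℝ)), Real.sq_sqrt hm.le]

theorem natAbs_coeff_det_le (P : Matrix ι ι ℤ[X]) {R c : ℝ} (hR : 1 ≤ R)
    (hc : ∀ z ∈ sphere (0 : ℂ) R, ∀ j k, ‖aeval z (P j k)‖ ≤ c) (i : ℕ) :
    ((P.det.coeff i).natAbs : ℝ) ≤ (√(Fintype.card ι) * c) ^ Fintype.card ι := by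
  set p := P.det.map (algebraMap ℤ ℂ)
  have eval_p : ∀ z, p.eval z = (P.map (aeval z)).det := fun z => by
    rw [eval_map_algebraMap, AlgHom.map_det]
    rfl
  have cauchy := norm_coeff_mul_pow_le (p := p) (by positivity) (i := i) fun z hz => by
    rw [eval_p]
    exact norm_det_le_of_forall_norm_le _ fun j k => hc z hz j k
  have coeff_p : ‖p.coeff i‖ = ((P.det.coeff i).natAbs : ℝ) := by
    rw [coeff_map, algebraMap_int_eq, eq_intCast, Complex.norm_intCast, Nat.cast_natAbs,
      Int.cast_abs]
  rw [← coeff_p]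
  exact (le_mul_of_one_le_right (norm_nonneg _) (one_le_pow₀ hR)).trans cauchy

end Matrix

theorem abs_le_maxEntry {m n : ℕ} (A : Matrix (Fin m) (Fin n) ℤ) (i : Fin m) (j : Fin n) :
    |(A i j : ℝ)| ≤ maxEntry A := by
  rw [← Int.cast_abs, Int.abs_eq_natAbs, Int.cast_natCast, Nat.cast_le]
  exact Finset.le_sup (f := fun p : Fin m × Fin n => (A p.1 p.2).natAbs) (b := (i, j))
    (mem_product.2 ⟨mem_univ i, mem_univ j⟩)

namespace Matrix

variable {R ι : Type*} [CommRing R] [DecidableEq ι]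

/-- `B - t I + t eₗ eₗᵀ` with `t = X`: the variable is removed from the diagonal entry `(l, l)`. -/
noncomputable def subXExcept (B : Matrix ι ι R) (l : ι) : Matrix ι ι R[X] :=
  B.map C - (X : R[X]) • 1 + single l l X

theorem subXExcept_apply (B : Matrix ι ι R) (l j k : ι) :
    B.subXExcept l j k = C (B j k) - if j = k ∧ j ≠ l then X else 0 := by
  by_cases hjk : j = k
  · subst hjk
    by_cases hjl : j = l
    · subst hjl; simp [subXExcept]
    · simp [subXExcept, hjl, Ne.symm hjl]
  · simp [subXExcept, hjk, single_apply_of_ne _ _ _ _ _ fun h => hjk (h.1.symm.trans h.2)]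

theorem det_subXExcept_eq_zero [Fintype ι] {B : Matrix ι ι R} {l : ι} (hB : ∀ k, B l k = 0) :
    (B.subXExcept l).det = 0 :=
  det_eq_zero_of_row_eq_zero l fun k => by simp [subXExcept_apply, hB]

theorem norm_aeval_subXExcept_apply_le (B : Matrix ι ι ℤ) (l j k : ι) (z : ℂ) :
    ‖aeval z (B.subXExcept l j k)‖ ≤ |(B j k : ℝ)| + ‖z‖ := by
  rw [subXExcept_apply, map_sub, aeval_C, algebraMap_int_eq, eq_intCast]
  split_ifs
  · simpa using norm_sub_le (B j k : ℂ) z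
  · simp

end Matrix

/-- Let `B` be an `n × n` integer matrix and `q(t) = det (B - t I + t eₙ eₙ*)`, i.e. `B - t I`
with the variable removed from the `(n,n)` entry.  Then every coefficient `q i` satisfies
`|q i| ≤ 2 (2 √n max |B k l|)^n`. -/
theorem stmt9 {n : ℕ} (hn : 0 < n) (B : Matrix (Fin n) (Fin n) ℤ) (i : ℕ) :
    ((((B.map Polynomial.C -
            (Polynomial.X : Polynomial ℤ) • (1 : Matrix (Fin n) (Fin n) (Polynomial ℤ)) +
            Matrix.single (⟨n - 1, Nat.sub_lt hn Nat.one_pos⟩ : Fin n)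
              (⟨n - 1, Nat.sub_lt hn Nat.one_pos⟩ : Fin n) (Polynomial.X : Polynomial ℤ)).det).coeff
        i).natAbs : ℝ) ≤
      2 * (2 * Real.sqrt n * (maxEntry B : ℝ)) ^ n := by
  set l : Fin n := ⟨n - 1, Nat.sub_lt hn Nat.one_pos⟩
  change (((B.subXExcept l).det.coeff i).natAbs : ℝ) ≤ _
  rcases Nat.eq_zero_or_pos (maxEntry B) with ha | ha
  · have hB : ∀ k, B l k = 0 := fun k => by
      simpa [ha] using abs_le_maxEntry B l k
    simp [det_subXExcept_eq_zero hB, ha, hn.ne']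
  have entry_le : ∀ z ∈ sphere (0 : ℂ) (maxEntry B), ∀ j k,
      ‖aeval z (B.subXExcept l j k)‖ ≤ 2 * maxEntry B := fun z hz j k => by
    grw [norm_aeval_subXExcept_apply_le, abs_le_maxEntry, mem_sphere_zero_iff_norm.1 hz, two_mul]
  calc _ ≤ (√n * (2 * maxEntry B) : ℝ) ^ n := by
        simpa using natAbs_coeff_det_le _ (by exact_mod_cast ha) entry_le i
    _ = (2 * √n * maxEntry B) ^ n := by ring
    _ ≤ 2 * (2 * √n * maxEntry B) ^ n := le_mul_of_one_le_left (by positivity) one_le_two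
end

section
/- Let f ∈ ℤ[x] with f(ζ) = 0, deg f = d, and all roots simple. Then |f'(ζ)| ≥ d^(−2d) · (max|f_i|)^(−d²) · 2^(−d(d−1)). -/
/-!
Write `c` for the leading coefficient of `f`, `d` for its degree and `M` for `maxCoeff f`.
The number `β = c ^ (d - 1) * f'(ζ)` is a nonzero algebraic integer of `ℚ(ζ)`, a field of degree
at most `d`, and its conjugates are the numbers `c ^ (d - 1) * f'(ζ')` at the roots `ζ'` of `f`.
Cauchy's bound gives `|c ζ'| ≤ 2M`, and expanding `c ^ (d - 1) * f'(ζ')` in powers of `c ζ'`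
bounds every conjugate by `B = d² 2^(d-1) M^d`. Since the norm of `β` is a nonzero integer,
`1 ≤ |β| B^(d-1) ≤ M^(d-1) |f'(ζ)| B^(d-1)`.
-/

open Polynomial NumberField IntermediateField

def maxCoeff (f : Polynomial ℤ) : ℕ :=
  f.support.sup fun i => (f.coeff i).natAbs

lemma natAbs_coeff_le_maxCoeff (f : ℤ[X]) (i : ℕ) : (f.coeff i).natAbs ≤ maxCoeff f := by
  by_cases h : i ∈ f.support
  · exact Finset.le_sup (f := fun i ↦ (f.coeff i).natAbs) h
  · simp [notMem_support_iff.mp h]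

lemma norm_intCast_coeff_le_maxCoeff (f : ℤ[X]) (i : ℕ) : ‖(f.coeff i : ℂ)‖ ≤ maxCoeff f := by
  rw [Complex.norm_intCast, ← Int.cast_abs, Int.abs_eq_natAbs]
  exact_mod_cast natAbs_coeff_le_maxCoeff f i

lemma one_le_maxCoeff {f : ℤ[X]} (hf : f ≠ 0) : 1 ≤ maxCoeff f :=
  (Int.natAbs_pos.mpr (leadingCoeff_ne_zero.mpr hf)).trans_le (natAbs_coeff_le_maxCoeff f _)

section NormedField
variable {K : Type*} [NormedField K] {p : K[X]} {M : ℝ}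

lemma norm_leadingCoeff_mul_le_of_isRoot (hp : p ≠ 0) {a : K} (ha : p.IsRoot a)
    (hM : ∀ i, ‖p.coeff i‖ ≤ M) : ‖p.leadingCoeff * a‖ ≤ 2 * M := by
  set s : NNReal := (Finset.range p.natDegree).sup (‖p.coeff ·‖₊)
  have hlc : 0 < ‖p.leadingCoeff‖ := norm_pos_iff.mpr (leadingCoeff_ne_zero.mpr hp)
  have hs : (s : ℝ) ≤ M := by
    have hM0 : 0 ≤ M := (norm_nonneg _).trans (hM 0)
    rw [← NNReal.coe_mk M hM0, NNReal.coe_le_coe]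
    exact Finset.sup_le fun i _ ↦ hM i
  have hroot : ‖a‖ < s / ‖p.leadingCoeff‖ + 1 := by
    simpa [cauchyBound] using NNReal.coe_lt_coe.mpr (ha.norm_lt_cauchyBound hp)
  calc ‖p.leadingCoeff * a‖ ≤ ‖p.leadingCoeff‖ * (s / ‖p.leadingCoeff‖ + 1) := by
        rw [norm_mul]; gcongr
    _ = s + ‖p.leadingCoeff‖ := by field_simp
    _ ≤ M + M := add_le_add hs (hM _)
    _ = 2 * M := by ring

lemma norm_coeff_derivative_le (hM : ∀ i, ‖p.coeff i‖ ≤ M) {i : ℕ} (hi : i < p.natDegree) :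
    ‖(derivative p).coeff i‖ ≤ p.natDegree * M := by
  have hcast : ‖((i + 1 : ℕ) : K)‖ ≤ p.natDegree :=
    calc ‖((i + 1 : ℕ) : K)‖ ≤ ((i + 1 : ℕ) : ℝ) := by simpa using Nat.norm_cast_le (α := K) (i + 1)
      _ ≤ p.natDegree := by exact_mod_cast hi
  rw [coeff_derivative, norm_mul, mul_comm]
  exact mul_le_mul (by exact_mod_cast hcast) (hM _) (norm_nonneg _) (Nat.cast_nonneg _)

lemma norm_leadingCoeff_pow_mul_eval_derivative_le (hp : p ≠ 0) {a : K} (ha : p.IsRoot a)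
    (hM : ∀ i, ‖p.coeff i‖ ≤ M) :
    ‖p.leadingCoeff ^ (p.natDegree - 1) * (derivative p).eval a‖ ≤
      p.natDegree ^ 2 * 2 ^ (p.natDegree - 1) * M ^ p.natDegree := by
  set c := p.leadingCoeff
  set n := p.natDegree
  rcases Nat.eq_zero_or_pos n with hn | hn
  · simp [n, hn, derivative_of_natDegree_zero hn]
  have hM0 : 0 ≤ M := (norm_nonneg _).trans (hM 0)
  have hc : ‖c‖ ≤ M := hM _
  have hca : ‖c * a‖ ≤ 2 * M := norm_leadingCoeff_mul_le_of_isRoot hp ha hM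
  have hterm : ∀ i ∈ Finset.range n,
      ‖c ^ (n - 1) * ((derivative p).coeff i * a ^ i)‖ ≤ n * 2 ^ (n - 1) * M ^ n := by
    intro i hi
    have hi : i < n := Finset.mem_range.mp hi
    calc ‖c ^ (n - 1) * ((derivative p).coeff i * a ^ i)‖
        = ‖(derivative p).coeff i‖ * ‖c‖ ^ (n - 1 - i) * ‖c * a‖ ^ i := by
          rw [← pow_sub_mul_pow c (show i ≤ n - 1 by omega)]
          simp only [norm_mul, norm_pow]
          ring
      _ ≤ (n * M) * M ^ (n - 1 - i) * (2 * M) ^ i := by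
          gcongr
          exact norm_coeff_derivative_le hM hi
      _ = n * 2 ^ i * M ^ n := by
          have hMn : M ^ n = M * (M ^ (n - 1 - i) * M ^ i) := by
            rw [pow_sub_mul_pow M (show i ≤ n - 1 by omega), ← pow_succ', Nat.sub_add_cancel hn]
          rw [mul_pow, hMn]
          ring
      _ ≤ n * 2 ^ (n - 1) * M ^ n := by gcongr <;> [norm_num; omega]
  calc ‖c ^ (n - 1) * (derivative p).eval a‖
      = ‖∑ i ∈ Finset.range n, c ^ (n - 1) * ((derivative p).coeff i * a ^ i)‖ := by
        rw [eval_eq_sum_range' (natDegree_derivative_lt hn.ne'), Finset.mul_sum]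
    _ ≤ ∑ i ∈ Finset.range n, ‖c ^ (n - 1) * ((derivative p).coeff i * a ^ i)‖ :=
        norm_sum_le _ _
    _ ≤ n • (n * 2 ^ (n - 1) * M ^ n) := by
        simpa using Finset.sum_le_card_nsmul _ _ _ hterm
    _ = n ^ 2 * 2 ^ (n - 1) * M ^ n := by rw [nsmul_eq_mul]; ring

end NormedField

lemma isIntegral_algebraMap_pow_natDegree_mul_aeval {R S : Type*} [CommRing R] [CommRing S]
    [Algebra R S] {s : R} {x : S} (hx : IsIntegral R (algebraMap R S s * x)) (q : R[X]) :
    IsIntegral R (algebraMap R S s ^ q.natDegree * aeval x q) := by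
  rw [aeval_def, ← scaleRoots_eval₂_mul, ← aeval_def]
  exact adjoin_le_integralClosure hx (aeval_mem_adjoin_singleton R _)

section NumberField
variable {K : Type*} [Field K] [NumberField K]

lemma house_le_of_forall_norm_le {α : K} {B : ℝ} (h : ∀ σ : K →+* ℂ, ‖σ α‖ ≤ B) :
    house α ≤ B := by
  obtain ⟨σ, -, hσ⟩ := Finset.exists_mem_eq_sup' Finset.univ_nonempty fun φ : K →+* ℂ ↦ ‖φ α‖₊
  rw [house_eq_sup', hσ]
  exact h σ

lemma one_le_norm_algebraNorm_of_isIntegral {α : K} (hα : IsIntegral ℤ α) (hα0 : α ≠ 0) :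
    1 ≤ ‖Algebra.norm ℚ α‖ := by
  let x : 𝓞 K := ⟨α, hα⟩
  have hx0 : Algebra.norm ℤ x ≠ 0 := by
    rw [Algebra.norm_ne_zero_iff]
    exact fun h ↦ hα0 (congrArg Subtype.val h)
  calc (1 : ℝ)
      ≤ ‖((Algebra.norm ℤ x : ℤ) : ℚ)‖ := by
        rw [Int.norm_cast_rat, Int.norm_eq_abs]
        exact_mod_cast Int.one_le_abs hx0
    _ = ‖Algebra.norm ℚ α‖ := by rw [Algebra.coe_norm_int]; rfl

lemma one_le_norm_mul_house_pow {α : K} (hα : IsIntegral ℤ α) (hα0 : α ≠ 0) (σ : K →+* ℂ)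
    {n : ℕ} (hn : Module.finrank ℚ K ≤ n) : 1 ≤ ‖σ α‖ * house α ^ (n - 1) :=
  calc 1 ≤ ‖Algebra.norm ℚ α‖ := one_le_norm_algebraNorm_of_isIntegral hα hα0
    _ ≤ ‖σ α‖ * house α ^ (Module.finrank ℚ K - 1) := norm_norm_le_norm_mul_house_pow α σ
    _ ≤ ‖σ α‖ * house α ^ (n - 1) := by
      gcongr
      exact one_le_house_of_isIntegral hα hα0

end NumberField

lemma eval_map_intCast (f : ℤ[X]) {S : Type*} [Ring S] (x : S) :
    (f.map (Int.castRingHom S)).eval x = aeval x f := by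
  rw [← algebraMap_int_eq, eval_map_algebraMap]

lemma RingHom.map_aeval_int {A B : Type*} [Ring A] [Ring B] (σ : A →+* B) (x : A) (p : ℤ[X]) :
    σ (aeval x p) = aeval (σ x) p :=
  (aeval_algHom_apply σ.toIntAlgHom x p).symm

lemma isIntegral_leadingCoeff_pow_mul_aeval_derivative {S : Type*} [CommRing S] (f : ℤ[X])
    {z : S} (hz : aeval z f = 0) :
    IsIntegral ℤ ((f.leadingCoeff : S) ^ (f.natDegree - 1) * aeval z (derivative f)) := by
  have hcz : IsIntegral ℤ (algebraMap ℤ S f.leadingCoeff * z) := by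
    simpa only [Algebra.smul_def] using isIntegral_leadingCoeff_smul f z hz
  simpa using isIntegral_algebraMap_pow_natDegree_mul_aeval hcz (derivative f)

lemma norm_leadingCoeff_pow_mul_aeval_derivative_le {f : ℤ[X]} (hf : f ≠ 0) {w : ℂ}
    (hw : aeval w f = 0) :
    ‖(f.leadingCoeff : ℂ) ^ (f.natDegree - 1) * aeval w (derivative f)‖ ≤
      f.natDegree ^ 2 * 2 ^ (f.natDegree - 1) * (maxCoeff f : ℝ) ^ f.natDegree := by
  have hF : f.map (Int.castRingHom ℂ) ≠ 0 := (Polynomial.map_ne_zero_iff Int.cast_injective).mpr hf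
  have hroot : (f.map (Int.castRingHom ℂ)).IsRoot w := by rwa [IsRoot, eval_map_intCast]
  have h := norm_leadingCoeff_pow_mul_eval_derivative_le hF hroot fun i ↦ by
    simpa using norm_intCast_coeff_le_maxCoeff f i
  rwa [leadingCoeff_map_of_injective Int.cast_injective, natDegree_map_eq_of_injective
    Int.cast_injective, derivative_map, eval_map_intCast] at h

lemma finrank_adjoin_le_natDegree {f : ℤ[X]} (hf : f ≠ 0) {ζ : ℂ} (hζ : aeval ζ f = 0) :
    Module.finrank ℚ ℚ⟮ζ⟯ ≤ f.natDegree := by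
  have hfℚ : f.map (Int.castRingHom ℚ) ≠ 0 := (Polynomial.map_ne_zero_iff Int.cast_injective).mpr hf
  have hfℚζ : aeval ζ (f.map (Int.castRingHom ℚ)) = 0 := by
    rwa [← algebraMap_int_eq, aeval_map_algebraMap]
  rw [adjoin.finrank (IsAlgebraic.isIntegral ⟨_, hfℚ, hfℚζ⟩)]
  calc (minpoly ℚ ζ).natDegree ≤ (f.map (Int.castRingHom ℚ)).natDegree :=
        natDegree_le_of_dvd (minpoly.dvd ℚ ζ hfℚζ) hfℚ
    _ = f.natDegree := natDegree_map_eq_of_injective (f := Int.castRingHom ℚ) Int.cast_injective f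

lemma one_le_norm_aeval_derivative_mul {f : ℤ[X]} (hf : f ≠ 0) {ζ : ℂ} (hζ : aeval ζ f = 0)
    (hζ' : aeval ζ (derivative f) ≠ 0) :
    1 ≤ ‖aeval ζ (derivative f)‖ * ((maxCoeff f : ℝ) ^ (f.natDegree - 1) *
      ((f.natDegree : ℝ) ^ 2 * 2 ^ (f.natDegree - 1) * maxCoeff f ^ f.natDegree) ^
        (f.natDegree - 1)) := by
  set c := f.leadingCoeff
  set d := f.natDegree
  set M := (maxCoeff f : ℝ)
  have hζint : IsIntegral ℚ ζ :=
    (IsAlgebraic.extendScalars (algebraMap ℤ ℚ).injective_int ⟨f, hf, hζ⟩).isIntegral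
  have : FiniteDimensional ℚ ℚ⟮ζ⟯ := adjoin.finiteDimensional hζint
  have : NumberField ℚ⟮ζ⟯ := ⟨⟩
  set z := AdjoinSimple.gen ℚ ζ
  have hz : aeval z f = 0 := by
    apply (algebraMap ℚ⟮ζ⟯ ℂ).injective
    rw [map_zero, RingHom.map_aeval_int]
    exact hζ
  set β : ℚ⟮ζ⟯ := (c : ℚ⟮ζ⟯) ^ (d - 1) * aeval z (derivative f)
  have hσβ : ∀ σ : ℚ⟮ζ⟯ →+* ℂ, σ β = (c : ℂ) ^ (d - 1) * aeval (σ z) (derivative f) := by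
    intro σ
    rw [map_mul, map_pow, map_intCast, RingHom.map_aeval_int]
  have hζ0 : algebraMap ℚ⟮ζ⟯ ℂ z = ζ := AdjoinSimple.algebraMap_gen ℚ ζ
  have hβ0 : β ≠ 0 := by
    rw [← map_ne_zero (algebraMap ℚ⟮ζ⟯ ℂ), hσβ, hζ0]
    exact mul_ne_zero (pow_ne_zero _ (Int.cast_ne_zero.mpr (leadingCoeff_ne_zero.mpr hf))) hζ'
  have hhouse : house β ≤ d ^ 2 * 2 ^ (d - 1) * M ^ d := by
    refine house_le_of_forall_norm_le fun σ ↦ ?_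
    rw [hσβ]
    refine norm_leadingCoeff_pow_mul_aeval_derivative_le hf ?_
    rw [← RingHom.map_aeval_int, hz, map_zero]
  have hc : ‖(c : ℂ)‖ ≤ M := norm_intCast_coeff_le_maxCoeff f d
  calc 1 ≤ ‖algebraMap ℚ⟮ζ⟯ ℂ β‖ * house β ^ (d - 1) :=
        one_le_norm_mul_house_pow (isIntegral_leadingCoeff_pow_mul_aeval_derivative f hz) hβ0 _
          (finrank_adjoin_le_natDegree hf hζ)
    _ ≤ (M ^ (d - 1) * ‖aeval ζ (derivative f)‖) * (d ^ 2 * 2 ^ (d - 1) * M ^ d) ^ (d - 1) := by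
        rw [hσβ, hζ0, norm_mul, norm_pow]
        have := house_nonneg β
        gcongr
    _ = _ := by ring

lemma pow_pred_mul_pow_pred_le (d : ℕ) {M : ℝ} (hM : 1 ≤ M) :
    M ^ (d - 1) * ((d : ℝ) ^ 2 * 2 ^ (d - 1) * M ^ d) ^ (d - 1) ≤
      (d : ℝ) ^ (2 * d) * M ^ (d ^ 2) * 2 ^ (d * (d - 1)) := by
  obtain _ | e := d
  · simp
  have he : (1 : ℝ) ≤ (e + 1 : ℕ) := by exact_mod_cast Nat.le_add_left 1 e
  have hexp₁ : 2 * e ≤ 2 * (e + 1) := by omega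
  have hexp₂ : e + (e + 1) * e ≤ (e + 1) ^ 2 := by nlinarith
  have hexp₃ : e * e ≤ (e + 1) * e := Nat.mul_le_mul_right e e.le_succ
  calc M ^ e * (((e + 1 : ℕ) : ℝ) ^ 2 * 2 ^ e * M ^ (e + 1)) ^ e
      = ((e + 1 : ℕ) : ℝ) ^ (2 * e) * M ^ (e + (e + 1) * e) * 2 ^ (e * e) := by
        rw [mul_pow, mul_pow, ← pow_mul, ← pow_mul, ← pow_mul, pow_add]
        ring
    _ ≤ ((e + 1 : ℕ) : ℝ) ^ (2 * (e + 1)) * M ^ ((e + 1) ^ 2) * 2 ^ ((e + 1) * e) := by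
        gcongr; exact one_le_two

/-- Let `f` be a degree-`d` integer polynomial with all roots simple and `f(ζ) = 0`.  Then
`|f'(ζ)| ≥ d^(-2d) (max |fᵢ|)^(-d²) 2^(-d(d-1))`. -/
theorem stmt12 (f : Polynomial ℤ) (hsq : Squarefree (f.map (Int.castRingHom ℂ)))
    (ζ : ℂ) (hζ : Polynomial.aeval ζ f = 0) :
    ‖(Polynomial.derivative (f.map (Int.castRingHom ℂ))).eval ζ‖ ≥
      ((f.natDegree : ℝ) ^ (2 * f.natDegree) * (maxCoeff f : ℝ) ^ (f.natDegree ^ 2) *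
          2 ^ (f.natDegree * (f.natDegree - 1)))⁻¹ := by
  have hf : f ≠ 0 := by
    rintro rfl
    simp at hsq
  have hroot : aeval ζ (f.map (Int.castRingHom ℂ)) = 0 := by
    rwa [coe_aeval_eq_eval, eval_map_intCast]
  have hζ' := (PerfectField.separable_iff_squarefree.mpr hsq).aeval_derivative_ne_zero hroot
  rw [coe_aeval_eq_eval, derivative_map, eval_map_intCast] at hζ'
  rw [derivative_map, eval_map_intCast, ge_iff_le]
  have hlower := one_le_norm_aeval_derivative_mul hf hζ hζ'
  have hupper := pow_pred_mul_pow_pred_le f.natDegree (M := maxCoeff f)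
    (by exact_mod_cast one_le_maxCoeff hf)
  have hprod := hlower.trans (mul_le_mul_of_nonneg_left hupper (norm_nonneg _))
  have hpos := pos_of_mul_pos_right (one_pos.trans_le hprod) (norm_nonneg _)
  exact (inv_le_iff_one_le_mul₀ hpos).mpr hprod
end

section
/- Let λ_i ≠ λ_j be two distinct eigenvalues of an n×n integer matrix A. Then |λ_j/λ_i − 1| ≥ 8^(−n) · (4n)^(−n²) · (max_{k,l}|A_{kl}|)^(−2n²). -/
open Polynomial Module IntermediateField

namespace Matrix

variable {ι 𝕜 : Type*} [Fintype ι] [DecidableEq ι]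

theorem hasEigenvalue_toLin'_of_mulVec_eq_smul [Field 𝕜] {B : Matrix ι ι 𝕜} {μ : 𝕜}
    {v : ι → 𝕜} (hv : v ≠ 0) (h : B *ᵥ v = μ • v) : End.HasEigenvalue (toLin' B) μ :=
  End.hasEigenvalue_of_hasEigenvector ⟨End.mem_eigenspace_iff.mpr h, hv⟩

theorem hasEigenvalue_toLin'_iff_isRoot_charpoly [Field 𝕜] (B : Matrix ι ι 𝕜) (μ : 𝕜) :
    End.HasEigenvalue (toLin' B) μ ↔ B.charpoly.IsRoot μ := by
  rw [End.hasEigenvalue_iff_isRoot_charpoly, charpoly_toLin']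

theorem norm_le_card_mul_of_hasEigenvalue [NormedField 𝕜] {B : Matrix ι ι 𝕜} {μ : 𝕜}
    (hμ : End.HasEigenvalue (toLin' B) μ) {M : ℝ} (hM : ∀ i j, ‖B i j‖ ≤ M) :
    ‖μ‖ ≤ Fintype.card ι * M := by
  obtain ⟨k, hk⟩ := eigenvalue_mem_ball hμ
  calc ‖μ‖ ≤ ‖B k k‖ + ∑ j ∈ Finset.univ.erase k, ‖B k j‖ := norm_le_of_mem_closedBall hk
    _ = ∑ j, ‖B k j‖ := Finset.add_sum_erase _ (fun j => ‖B k j‖) (Finset.mem_univ k)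
    _ ≤ ∑ _j : ι, M := Finset.sum_le_sum fun j _ => hM k j
    _ = Fintype.card ι * M := by simp

end Matrix

theorem natAbs_le_maxEntry {m n : ℕ} (A : Matrix (Fin m) (Fin n) ℤ) (k : Fin m) (l : Fin n) :
    (A k l).natAbs ≤ maxEntry A :=
  Finset.le_sup (f := fun p : Fin m × Fin n => (A p.1 p.2).natAbs) (b := (k, l)) (by simp)

theorem aeval_charpoly_eq_zero_iff_hasEigenvalue {n : ℕ} (A : Matrix (Fin n) (Fin n) ℤ) (z : ℂ) :
    aeval z A.charpoly = 0 ↔ End.HasEigenvalue (Matrix.toLin' (A.map (Int.cast : ℤ → ℂ))) z := by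
  rw [Matrix.hasEigenvalue_toLin'_iff_isRoot_charpoly, IsRoot, aeval_def, eval₂_eq_eval_map,
    ← Matrix.charpoly_map]
  rfl

theorem norm_le_of_aeval_charpoly_eq_zero {n : ℕ} (A : Matrix (Fin n) (Fin n) ℤ) {z : ℂ}
    (hz : aeval z A.charpoly = 0) : ‖z‖ ≤ n * maxEntry A := by
  have hM (k l : Fin n) : ‖(A k l : ℂ)‖ ≤ maxEntry A := by
    rw [Complex.norm_intCast, ← Int.cast_abs, ← Nat.cast_natAbs]
    exact_mod_cast natAbs_le_maxEntry A k l
  simpa using Matrix.norm_le_card_mul_of_hasEigenvalue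
    ((aeval_charpoly_eq_zero_iff_hasEigenvalue A z).mp hz) hM

theorem aeval_charpoly_eq_zero_of_mulVec_eq_smul {n : ℕ} (A : Matrix (Fin n) (Fin n) ℤ) {μ : ℂ}
    {v : Fin n → ℂ} (hv : v ≠ 0) (h : (A.map (Int.cast : ℤ → ℂ)).mulVec v = μ • v) :
    aeval μ A.charpoly = 0 :=
  (aeval_charpoly_eq_zero_iff_hasEigenvalue A μ).mpr
    (Matrix.hasEigenvalue_toLin'_of_mulVec_eq_smul hv h)

section NumberField

variable {K : Type*} [Field K] [Algebra ℚ K] [FiniteDimensional ℚ K]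

theorem one_le_prod_norm_embeddings {x : K} (hx : IsIntegral ℤ x) (hx0 : x ≠ 0) :
    1 ≤ ∏ σ : K →ₐ[ℚ] ℂ, ‖σ x‖ := by
  obtain ⟨m, hm⟩ := IsIntegrallyClosed.isIntegral_iff.mp (Algebra.isIntegral_norm ℚ hx)
  have hm0 : m ≠ 0 := by
    rintro rfl
    exact Algebra.norm_ne_zero_iff.mpr hx0 (by rw [← hm, map_zero])
  rw [← norm_prod, ← Algebra.norm_eq_prod_embeddings ℚ ℂ x, ← hm]
  simp only [algebraMap_int_eq, eq_intCast, map_intCast, Complex.norm_intCast]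
  exact_mod_cast Int.one_le_abs hm0

theorem one_le_norm_mul_pow_finrank_sub_one {x : K} (hx : IsIntegral ℤ x) (hx0 : x ≠ 0)
    (σ₀ : K →ₐ[ℚ] ℂ) {C : ℝ} (hC : ∀ σ : K →ₐ[ℚ] ℂ, ‖σ x‖ ≤ C) :
    1 ≤ ‖σ₀ x‖ * C ^ (finrank ℚ K - 1) := by
  classical
  have hcard : (Finset.univ.erase σ₀).card = finrank ℚ K - 1 := by
    rw [Finset.card_erase_of_mem (Finset.mem_univ σ₀), Finset.card_univ, AlgHom.card ℚ K ℂ]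
  calc 1 ≤ ∏ σ : K →ₐ[ℚ] ℂ, ‖σ x‖ := one_le_prod_norm_embeddings hx hx0
    _ = ‖σ₀ x‖ * ∏ σ ∈ Finset.univ.erase σ₀, ‖σ x‖ :=
        (Finset.mul_prod_erase _ _ (Finset.mem_univ σ₀)).symm
    _ ≤ ‖σ₀ x‖ * C ^ (finrank ℚ K - 1) := by
        rw [← hcard, ← Finset.prod_const]
        gcongr with σ
        exact hC σ

end NumberField

theorem finrank_adjoin_simple_le {F E : Type*} [Field F] [Field E] [Algebra F E] {p : F[X]}
    (hp : p ≠ 0) {a : E} (ha : aeval a p = 0) : finrank F F⟮a⟯ ≤ p.natDegree := by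
  rw [adjoin.finrank (IsAlgebraic.isIntegral ⟨p, hp, ha⟩)]
  exact natDegree_le_of_dvd (minpoly.dvd F a ha) hp

theorem finrank_adjoin_pair_le {F E : Type*} [Field F] [Field E] [Algebra F E] {p : F[X]}
    (hp : p ≠ 0) {a b : E} (ha : aeval a p = 0) (hb : aeval b p = 0) :
    finrank F F⟮a, b⟯ ≤ p.natDegree ^ 2 := by
  have hb' : aeval b (p.map (algebraMap F F⟮a⟯)) = 0 := by rwa [aeval_map_algebraMap]
  rw [← adjoin_simple_adjoin_simple]
  calc finrank F (F⟮a⟯⟮b⟯.restrictScalars F) = finrank F F⟮a⟯ * finrank F⟮a⟯ F⟮a⟯⟮b⟯ :=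
        (finrank_mul_finrank F F⟮a⟯ F⟮a⟯⟮b⟯).symm
    _ ≤ p.natDegree * p.natDegree := by
        gcongr
        · exact finrank_adjoin_simple_le hp ha
        · simpa using finrank_adjoin_simple_le (Polynomial.map_ne_zero hp) hb'
    _ = p.natDegree ^ 2 := (sq _).symm

theorem one_le_norm_sub_mul_pow_of_aeval_eq_zero {p : ℤ[X]} (hp : p.Monic) {B : ℝ}
    (hB : 1 ≤ 2 * B) (hroots : ∀ z : ℂ, aeval z p = 0 → ‖z‖ ≤ B) {a b : ℂ}
    (ha : aeval a p = 0) (hb : aeval b p = 0) (hab : a ≠ b) :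
    1 ≤ ‖a - b‖ * (2 * B) ^ (p.natDegree ^ 2 - 1) := by
  set q : ℚ[X] := p.map (algebraMap ℤ ℚ)
  have hq : q ≠ 0 := (hp.map _).ne_zero
  have haq : aeval a q = 0 := by rwa [aeval_map_algebraMap]
  have hbq : aeval b q = 0 := by rwa [aeval_map_algebraMap]
  set K := ℚ⟮a, b⟯
  have : FiniteDimensional ℚ K := finiteDimensional_adjoin <| by
    rintro x (rfl | rfl)
    exacts [IsAlgebraic.isIntegral ⟨q, hq, haq⟩, IsAlgebraic.isIntegral ⟨q, hq, hbq⟩]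
  set a' : K := ⟨a, subset_adjoin ℚ _ (by simp)⟩
  set b' : K := ⟨b, subset_adjoin ℚ _ (by simp)⟩
  have ha' : aeval a' p = 0 := (aeval_algebraMap_eq_zero_iff ℂ a' p).mp ha
  have hb' : aeval b' p = 0 := (aeval_algebraMap_eq_zero_iff ℂ b' p).mp hb
  have hconj (σ : K →ₐ[ℚ] ℂ) {y : K} (hy : aeval y p = 0) : ‖σ y‖ ≤ B := by
    refine hroots _ ((aeval_algHom_apply (σ.restrictScalars ℤ) y p).trans ?_)
    rw [hy, map_zero]
  have hint : IsIntegral ℤ (a' - b') := IsIntegral.sub ⟨p, hp, ha'⟩ ⟨p, hp, hb'⟩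
  have hsub : a' - b' ≠ 0 := sub_ne_zero.mpr fun h => hab (congrArg Subtype.val h)
  have hdeg : finrank ℚ K ≤ p.natDegree ^ 2 := by
    simpa [q, hp.natDegree_map] using finrank_adjoin_pair_le hq haq hbq
  calc 1 ≤ ‖a - b‖ * (2 * B) ^ (finrank ℚ K - 1) :=
        one_le_norm_mul_pow_finrank_sub_one hint hsub K.val fun σ => by
          rw [map_sub, two_mul]
          exact (norm_sub_le _ _).trans (add_le_add (hconj σ ha') (hconj σ hb'))
    _ ≤ ‖a - b‖ * (2 * B) ^ (p.natDegree ^ 2 - 1) := by gcongr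

theorem inv_mul_le_norm_div_sub_one {𝕜 : Type*} [NormedField 𝕜] {a b : 𝕜} {X B : ℝ}
    (hsep : 1 ≤ ‖a - b‖ * X) (hb : ‖b‖ ≤ B) (hb0 : b ≠ 0) : (X * B)⁻¹ ≤ ‖a / b - 1‖ := by
  have hb0' : 0 < ‖b‖ := norm_pos_iff.mpr hb0
  have hX : 0 < X := pos_of_mul_pos_right (one_pos.trans_le hsep) (norm_nonneg _)
  rw [div_sub_one hb0, norm_div, mul_inv, ← div_eq_mul_inv]
  calc X⁻¹ / B ≤ ‖a - b‖ / B :=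
        div_le_div_of_nonneg_right ((inv_le_iff_one_le_mul₀ hX).mpr hsep) (hb0'.le.trans hb)
    _ ≤ ‖a - b‖ / ‖b‖ := by gcongr

theorem two_mul_mul_pow_sq_le (n M : ℕ) (hM : 1 ≤ M) :
    (2 * (n * M)) ^ n ^ 2 ≤ 8 ^ n * (4 * n) ^ n ^ 2 * M ^ (2 * n ^ 2) :=
  calc (2 * (n * M)) ^ n ^ 2 = (2 * n) ^ n ^ 2 * M ^ n ^ 2 := by rw [← mul_assoc, mul_pow]
    _ ≤ (4 * n) ^ n ^ 2 * M ^ (2 * n ^ 2) := by gcongr <;> omega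
    _ ≤ 8 ^ n * ((4 * n) ^ n ^ 2 * M ^ (2 * n ^ 2)) := Nat.le_mul_of_pos_left _ (by positivity)
    _ = _ := (mul_assoc _ _ _).symm

/-- Let `λᵢ ≠ λⱼ` be two distinct (nonzero) eigenvalues of an `n × n` integer matrix `A`.  Then
`|λⱼ/λᵢ - 1| ≥ 8^(-n) (4n)^(-n²) (max |A k l|)^(-2n²)`. -/
theorem stmt15 {n : ℕ} (A : Matrix (Fin n) (Fin n) ℤ) (li lj : ℂ)
    (hi : ∃ v : Fin n → ℂ, v ≠ 0 ∧ (A.map (Int.cast : ℤ → ℂ)).mulVec v = li • v)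
    (hj : ∃ v : Fin n → ℂ, v ≠ 0 ∧ (A.map (Int.cast : ℤ → ℂ)).mulVec v = lj • v)
    (hne : li ≠ lj) (hi0 : li ≠ 0) :
    ‖lj / li - 1‖ ≥
      ((8 : ℝ) ^ n * (4 * (n : ℝ)) ^ (n ^ 2) * (maxEntry A : ℝ) ^ (2 * n ^ 2))⁻¹ := by
  obtain ⟨v, hv, hAv⟩ := hi
  obtain ⟨w, hw, hAw⟩ := hj
  have hroot_i := aeval_charpoly_eq_zero_of_mulVec_eq_smul A hv hAv
  have hroot_j := aeval_charpoly_eq_zero_of_mulVec_eq_smul A hw hAw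
  have hli : ‖li‖ ≤ n * maxEntry A := norm_le_of_aeval_charpoly_eq_zero A hroot_i
  have hnM : 0 < n * maxEntry A := by exact_mod_cast (norm_pos_iff.mpr hi0).trans_le hli
  have hB : (1 : ℝ) ≤ 2 * (n * maxEntry A) := by norm_cast; omega
  have hsep := one_le_norm_sub_mul_pow_of_aeval_eq_zero A.charpoly_monic hB
    (fun z hz => norm_le_of_aeval_charpoly_eq_zero A hz) hroot_j hroot_i hne.symm
  rw [A.charpoly_natDegree_eq_dim, Fintype.card_fin] at hsep
  have hn : n ^ 2 ≠ 0 := pow_ne_zero 2 (left_ne_zero_of_mul hnM.ne')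
  rw [ge_iff_le]
  calc ((8 : ℝ) ^ n * (4 * (n : ℝ)) ^ (n ^ 2) * (maxEntry A : ℝ) ^ (2 * n ^ 2))⁻¹
      ≤ ((2 * (n * maxEntry A : ℝ)) ^ (n ^ 2 - 1) * (2 * (n * maxEntry A)))⁻¹ := by
        rw [pow_sub_one_mul hn]
        refine inv_anti₀ (pow_pos (by linarith) _) ?_
        exact_mod_cast two_mul_mul_pow_sq_le n _ (Nat.pos_of_mul_pos_left hnM)
    _ ≤ ‖lj / li - 1‖ := inv_mul_le_norm_div_sub_one hsep (by linarith [norm_nonneg li]) hi0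
end

section
/- Let g(x) = Π_{i=1}^d (x − ζ_i^{2^k}) be the polynomial obtained from a monic degree-d polynomial f with distinct positive real roots ζ_1 > ζ_2 > ⋯ > ζ_d > 0 after k Graeffe iterations, and write g(x) = Σ_{i=0}^d g_i x^i. Then for each i, the elementary symmetric function σ_{d−i}(ζ_1^{2^k},…,ζ_d^{2^k}) is dominated by its largest monomial ζ_1^{2^k}⋯ζ_{d−i}^{2^k}, with relative error at most (2^d − 1)·(max_{i<j} ζ_j/ζ_i)^{2^k}. -/
/-- After `k` Graeffe iterations of a monic polynomial with distinct positive real roots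
`ζ₀ > ζ₁ > ⋯ > ζ_{d-1} > 0`, the coefficient `gᵢ` of `G^k f` is the elementary symmetric
function `σ_{d-i}(ζ₀^{2^k}, …, ζ_{d-1}^{2^k})`.  It is dominated by its largest monomial
`(ζ₀ ⋯ ζ_{d-i-1})^{2^k}` with relative error at most `(2^d - 1) (max_{i<j} ζⱼ/ζᵢ)^{2^k}`. -/
theorem stmt19 (d k : ℕ) (ζ : Fin d → ℝ) (hpos : ∀ i, 0 < ζ i) (hanti : StrictAnti ζ)
    (i : ℕ) (hi : i ≤ d) :
    |((Finset.univ.val.map fun l : Fin d => ζ l ^ 2 ^ k).esymm (d - i)) -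
        ∏ l ∈ Finset.univ.filter fun l : Fin d => (l : ℕ) < d - i, ζ l ^ 2 ^ k| ≤
      ((2 : ℝ) ^ d - 1) * (⨆ p : {p : Fin d × Fin d // p.1 < p.2}, ζ p.1.2 / ζ p.1.1) ^ 2 ^ k *
        ∏ l ∈ Finset.univ.filter fun l : Fin d => (l : ℕ) < d - i, ζ l ^ 2 ^ k := by
  classical
  set m := d - i with hm
  have hmd : m ≤ d := Nat.sub_le d i
  set r : ℝ := ⨆ p : {p : Fin d × Fin d // p.1 < p.2}, ζ p.1.2 / ζ p.1.1 with hr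
  set T : Finset (Fin d) := Finset.univ.filter fun l : Fin d => (l : ℕ) < m with hTdef
  have hbdd : BddAbove (Set.range fun p : {p : Fin d × Fin d // p.1 < p.2} =>
      ζ p.1.2 / ζ p.1.1) := (Set.finite_range _).bddAbove
  have hr0 : 0 ≤ r := by
    rcases isEmpty_or_nonempty {p : Fin d × Fin d // p.1 < p.2} with h | h
    · simp [hr, Real.iSup_of_isEmpty]
    · obtain ⟨p⟩ := h
      exact le_trans (div_pos (hpos _) (hpos _)).le (le_ciSup hbdd p)
  -- the cardinality of T
  have hTcard : T.card = m := by
    have : T = Finset.map (Fin.castLEEmb hmd) Finset.univ := by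
      ext l
      simp only [hTdef, Finset.mem_filter, Finset.mem_univ, true_and, Finset.mem_map,
        Fin.castLEEmb_apply]
      constructor
      · intro h; exact ⟨⟨(l : ℕ), h⟩, by ext; simp⟩
      · rintro ⟨a, rfl⟩; simpa using a.isLt
    rw [this]; simp
  set P := Finset.powersetCard m (Finset.univ : Finset (Fin d)) with hP
  have hT : T ∈ P := Finset.mem_powersetCard.mpr ⟨Finset.subset_univ _, hTcard⟩
  -- key: for S of card m with S ≠ T, ∏_{S} ζ ≤ r * ∏_{T} ζ
  have key : ∀ S : Finset (Fin d), S.card = m → S ≠ T →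
      (∏ l ∈ S, ζ l) ≤ r * ∏ l ∈ T, ζ l := by
    intro S hScard hST
    set A := S \ T with hA
    set B := T \ S with hB
    have hcards : A.card = B.card := by
      have h1 := Finset.card_sdiff_add_card_inter S T
      have h2 := Finset.card_sdiff_add_card_inter T S
      rw [Finset.inter_comm] at h2
      simp only [hA, hB]
      omega
    have hAne : A.Nonempty := by
      rw [Finset.nonempty_iff_ne_empty]
      intro h
      have hsub : S ⊆ T := by
        intro x hx
        by_contra hxT
        exact (Finset.notMem_empty x) (h ▸ Finset.mem_sdiff.mpr ⟨hx, hxT⟩)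
      exact hST (Finset.eq_of_subset_of_card_le hsub (by rw [hScard, hTcard]))
    have hBne : B.Nonempty := by
      rw [← Finset.card_pos, ← hcards, Finset.card_pos]; exact hAne
    have hpair : ∀ a ∈ A, ∀ b ∈ B, b < a := by
      intro a ha b hb
      have ha' : ¬ ((a : ℕ) < m) := by
        have := (Finset.mem_sdiff.mp ha).2
        simpa [hTdef] using this
      have hb' : (b : ℕ) < m := by
        have := (Finset.mem_sdiff.mp hb).1
        simpa [hTdef] using this
      exact Fin.lt_def.mpr (by omega)
    have hrge : ∀ a ∈ A, ∀ b ∈ B, ζ a ≤ r * ζ b := by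
      intro a ha b hb
      have h1 : ζ a / ζ b ≤ r := le_ciSup hbdd ⟨(b, a), hpair a ha b hb⟩
      calc ζ a = (ζ a / ζ b) * ζ b := (div_mul_cancel₀ _ (hpos b).ne').symm
        _ ≤ r * ζ b := mul_le_mul_of_nonneg_right h1 (hpos b).le
    obtain ⟨a0, ha0⟩ := hAne
    obtain ⟨b0, hb0⟩ := hBne
    have hne : Nonempty {p : Fin d × Fin d // p.1 < p.2} := ⟨⟨(b0, a0), hpair a0 ha0 b0 hb0⟩⟩
    have hr1 : r ≤ 1 := by
      apply ciSup_le
      intro p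
      exact div_le_one_of_le₀ (hanti p.2).le (hpos _).le
    have e : {x // x ∈ A} ≃ {x // x ∈ B} :=
      Fintype.equivOfCardEq (by simpa [Fintype.card_coe] using hcards)
    have step : (∏ a ∈ A, ζ a) ≤ r ^ A.card * ∏ b ∈ B, ζ b := by
      calc (∏ a ∈ A, ζ a) = ∏ a : {x // x ∈ A}, ζ a := (Finset.prod_coe_sort A ζ).symm
        _ ≤ ∏ a : {x // x ∈ A}, (r * ζ (e a)) :=
            Finset.prod_le_prod (fun _ _ => (hpos _).le)
              (fun a _ => hrge a a.2 (e a) (e a).2)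
        _ = r ^ A.card * ∏ a : {x // x ∈ A}, ζ (e a) := by
            rw [Finset.prod_mul_distrib, Finset.prod_const, Finset.card_univ,
              Fintype.card_coe]
        _ = r ^ A.card * ∏ b : {x // x ∈ B}, ζ b := by
            rw [Equiv.prod_comp e (fun b : {x // x ∈ B} => ζ (b : Fin d))]
        _ = r ^ A.card * ∏ b ∈ B, ζ b := by rw [Finset.prod_coe_sort B ζ]
    have hpow : r ^ A.card ≤ r := by
      have h1 : 1 ≤ A.card := Finset.card_pos.mpr ⟨a0, ha0⟩
      calc r ^ A.card ≤ r ^ 1 := pow_le_pow_of_le_one hr0 hr1 h1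
        _ = r := pow_one r
    have hBpos : 0 ≤ ∏ b ∈ B, ζ b := Finset.prod_nonneg fun b _ => (hpos b).le
    have step2 : (∏ a ∈ A, ζ a) ≤ r * ∏ b ∈ B, ζ b :=
      step.trans (mul_le_mul_of_nonneg_right hpow hBpos)
    calc (∏ l ∈ S, ζ l) = (∏ a ∈ A, ζ a) * ∏ l ∈ S ∩ T, ζ l := by
          rw [← Finset.prod_union (Finset.disjoint_sdiff_inter S T),
            Finset.sdiff_union_inter]
      _ ≤ (r * ∏ b ∈ B, ζ b) * ∏ l ∈ S ∩ T, ζ l :=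
          mul_le_mul_of_nonneg_right step2
            (Finset.prod_nonneg fun l _ => (hpos l).le)
      _ = r * ((∏ b ∈ B, ζ b) * ∏ l ∈ T ∩ S, ζ l) := by
          rw [Finset.inter_comm]; ring
      _ = r * ∏ l ∈ T, ζ l := by
          rw [← Finset.prod_union (Finset.disjoint_sdiff_inter T S),
            Finset.sdiff_union_inter]
  -- per-subset bound for the powered version
  have key2 : ∀ S ∈ P.erase T,
      (∏ l ∈ S, ζ l ^ 2 ^ k) ≤ r ^ 2 ^ k * ∏ l ∈ T, ζ l ^ 2 ^ k := by
    intro S hS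
    obtain ⟨hSne, hSP⟩ := Finset.mem_erase.mp hS
    have hScard : S.card = m := (Finset.mem_powersetCard.mp hSP).2
    have h1 : (∏ l ∈ S, ζ l) ≤ r * ∏ l ∈ T, ζ l := key S hScard hSne
    have h2 : (0:ℝ) ≤ ∏ l ∈ S, ζ l := Finset.prod_nonneg fun l _ => (hpos l).le
    calc (∏ l ∈ S, ζ l ^ 2 ^ k) = (∏ l ∈ S, ζ l) ^ 2 ^ k := by
          rw [Finset.prod_pow]
      _ ≤ (r * ∏ l ∈ T, ζ l) ^ 2 ^ k := pow_le_pow_left₀ h2 h1 _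
      _ = r ^ 2 ^ k * (∏ l ∈ T, ζ l) ^ 2 ^ k := mul_pow _ _ _
      _ = r ^ 2 ^ k * ∏ l ∈ T, ζ l ^ 2 ^ k := by rw [Finset.prod_pow]
  -- rewrite esymm as a sum over powersetCard
  have hesymm : ((Finset.univ.val.map fun l : Fin d => ζ l ^ 2 ^ k).esymm m) =
      ∑ S ∈ P, ∏ l ∈ S, ζ l ^ 2 ^ k := by
    rw [Finset.esymm_map_val]
  have hsplit : ((Finset.univ.val.map fun l : Fin d => ζ l ^ 2 ^ k).esymm m) -
      (∏ l ∈ T, ζ l ^ 2 ^ k) = ∑ S ∈ P.erase T, ∏ l ∈ S, ζ l ^ 2 ^ k := by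
    rw [hesymm, ← Finset.add_sum_erase P _ hT]; ring
  have hsum_nonneg : (0:ℝ) ≤ ∑ S ∈ P.erase T, ∏ l ∈ S, ζ l ^ 2 ^ k :=
    Finset.sum_nonneg fun S _ => Finset.prod_nonneg fun l _ => (pow_nonneg (hpos l).le _)
  have hTprod_nonneg : (0:ℝ) ≤ ∏ l ∈ T, ζ l ^ 2 ^ k :=
    Finset.prod_nonneg fun l _ => pow_nonneg (hpos l).le _
  have hcardP : P.card ≤ 2 ^ d := by
    rw [hP, Finset.card_powersetCard, Finset.card_univ, Fintype.card_fin]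
    calc Nat.choose d m ≤ ∑ j ∈ Finset.range (d + 1), Nat.choose d j :=
        Finset.single_le_sum (fun _ _ => Nat.zero_le _) (Finset.mem_range.mpr (by omega))
      _ = 2 ^ d := Nat.sum_range_choose d
  have hcard1 : 1 ≤ P.card := Finset.card_pos.mpr ⟨T, hT⟩
  have hbound : ∑ S ∈ P.erase T, ∏ l ∈ S, ζ l ^ 2 ^ k ≤
      ((2:ℝ) ^ d - 1) * (r ^ 2 ^ k * ∏ l ∈ T, ζ l ^ 2 ^ k) := by
    calc ∑ S ∈ P.erase T, ∏ l ∈ S, ζ l ^ 2 ^ k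
        ≤ (P.erase T).card • (r ^ 2 ^ k * ∏ l ∈ T, ζ l ^ 2 ^ k) :=
          Finset.sum_le_card_nsmul _ _ _ key2
      _ = ((P.erase T).card : ℝ) * (r ^ 2 ^ k * ∏ l ∈ T, ζ l ^ 2 ^ k) := by
          rw [nsmul_eq_mul]
      _ ≤ ((2:ℝ) ^ d - 1) * (r ^ 2 ^ k * ∏ l ∈ T, ζ l ^ 2 ^ k) := by
          apply mul_le_mul_of_nonneg_right _
            (mul_nonneg (pow_nonneg hr0 _) hTprod_nonneg)
          rw [Finset.card_erase_of_mem hT]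
          rw [Nat.cast_sub hcard1]
          push_cast
          have : (P.card : ℝ) ≤ (2:ℝ) ^ d := by exact_mod_cast hcardP
          linarith
  rw [show d - i = m from rfl] at *
  rw [hsplit, abs_of_nonneg hsum_nonneg]
  calc ∑ S ∈ P.erase T, ∏ l ∈ S, ζ l ^ 2 ^ k
      ≤ ((2:ℝ) ^ d - 1) * (r ^ 2 ^ k * ∏ l ∈ T, ζ l ^ 2 ^ k) := hbound
    _ = ((2:ℝ) ^ d - 1) * r ^ 2 ^ k * ∏ l ∈ T, ζ l ^ 2 ^ k := by ring
end
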